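/- arXiv:2207.00403 — 14 statements merged into one kernel-verified Lean document; each statement's English description precedes it below -/
import Mathlib

section
/- Let U, Û ⊆ ℝ^m_+ be uncertainty sets such that Û dominates U, i.e., there exists a function h : U → Û with h(ξ) ≥ ξ componentwise for every ξ ∈ U, and h is nonanticipative in the sense that for every stage t, each coordinate of h(ξ) with stage ≤ t depends only on the coordinates of ξ with stage ≤ t. Let β ≥ 1 be such that (1/β)·ξ̂ ∈ U for every ξ̂ ∈ Û. Then either Z_AR(U) = Z_AR(Û) = −∞ (both problems are unbounded below), or 0 ≤ Z_AR(U) ≤ Z_AR(Û) ≤ β · Z_AR(U). -/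
open Matrix

/-- A policy `x` is nonanticipative on the uncertainty set `U`: for every stage `t`,
whenever two scenarios agree on all uncertainty coordinates of stage `≤ t`, the
decisions of stage `≤ t` agree as well. -/
def Nonanticip {n m T : ℕ} (σ : Fin n → Fin T) (τ : Fin m → Fin T)
    (U : Set (Fin m → ℝ)) (x : (Fin m → ℝ) → (Fin n → ℝ)) : Prop :=
  ∀ t : Fin T, ∀ ξ ∈ U, ∀ ξ' ∈ U,
    (∀ i, τ i ≤ t → ξ i = ξ' i) → ∀ j, σ j ≤ t → x ξ j = x ξ' j

/-- A policy `x` is feasible on `U` if `A x(ξ) ≥ D ξ + d` componentwise for all `ξ ∈ U`. -/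
def FeasiblePolicy {l n m : ℕ} (A : Matrix (Fin l) (Fin n) ℝ)
    (D : Matrix (Fin l) (Fin m) ℝ) (d : Fin l → ℝ)
    (U : Set (Fin m → ℝ)) (x : (Fin m → ℝ) → (Fin n → ℝ)) : Prop :=
  ∀ ξ ∈ U, ∀ k, (D.mulVec ξ) k + d k ≤ (A.mulVec (x ξ)) k

/-- The optimal value (in the extended reals) of the multi-stage adjustable robust
problem on the uncertainty set `U`: the infimum over feasible nonanticipative
policies of the worst-case cost `sup_{ξ ∈ U} c ⬝ x(ξ)`. -/
noncomputable def ZAR {l n m T : ℕ} (A : Matrix (Fin l) (Fin n) ℝ) (c : Fin n → ℝ)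
    (D : Matrix (Fin l) (Fin m) ℝ) (d : Fin l → ℝ)
    (σ : Fin n → Fin T) (τ : Fin m → Fin T) (U : Set (Fin m → ℝ)) : EReal :=
  sInf {z : EReal | ∃ x, Nonanticip σ τ U x ∧ FeasiblePolicy A D d U x ∧
    z = ⨆ ξ : U, ((c ⬝ᵥ x ξ.1 : ℝ) : EReal)}

lemma ereal_mul_le_mul {β : ℝ} (hβ : 0 ≤ β) {a b : EReal} (hab : a ≤ b) :
    (β : EReal) * a ≤ (β : EReal) * b :=
  mul_le_mul_of_nonneg_left hab (by exact_mod_cast hβ)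

lemma ereal_inv_mul_cancel {β : ℝ} (hβ : 0 < β) (z : EReal) :
    ((β⁻¹ : ℝ) : EReal) * ((β : EReal) * z) = z := by
  rw [← mul_assoc, ← EReal.coe_mul, inv_mul_cancel₀ hβ.ne', EReal.coe_one, one_mul]

noncomputable def erealMulIso (β : ℝ) (hβ : 0 < β) : EReal ≃o EReal where
  toFun z := (β : EReal) * z
  invFun z := ((β⁻¹ : ℝ) : EReal) * z
  left_inv z := ereal_inv_mul_cancel hβ z
  right_inv z := by
    have := ereal_inv_mul_cancel (β := β⁻¹) (by positivity) z
    rwa [inv_inv] at this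
  map_rel_iff' := by
    intro a b
    constructor
    · intro hle
      have h2 := ereal_mul_le_mul (β := β⁻¹) (by positivity) hle
      simp only [Equiv.coe_fn_mk] at h2
      rwa [ereal_inv_mul_cancel hβ, ereal_inv_mul_cancel hβ] at h2
    · exact fun hle => ereal_mul_le_mul hβ.le hle

/-- **Theorem (domination bound).** If `Û` dominates `U` via a nonanticipative
domination function `h`, and `β ≥ 1` is such that `(1/β) ξ̂ ∈ U` for every `ξ̂ ∈ Û`,
then either both problems are unbounded (`= ⊥`) or
`0 ≤ Z_AR(U) ≤ Z_AR(Û) ≤ β · Z_AR(U)`. -/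
theorem stmt0 {l n m T : ℕ}
    (A : Matrix (Fin l) (Fin n) ℝ) (c : Fin n → ℝ)
    (D : Matrix (Fin l) (Fin m) ℝ) (d : Fin l → ℝ)
    (hD : ∀ i j, 0 ≤ D i j) (hd : ∀ i, 0 ≤ d i)
    (σ : Fin n → Fin T) (τ : Fin m → Fin T)
    (U Uhat : Set (Fin m → ℝ))
    (hU : ∀ ξ ∈ U, ∀ i, 0 ≤ ξ i) (hUhat : ∀ ξ ∈ Uhat, ∀ i, 0 ≤ ξ i)
    (h : (Fin m → ℝ) → (Fin m → ℝ))
    (hmap : ∀ ξ ∈ U, h ξ ∈ Uhat)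
    (hdom : ∀ ξ ∈ U, ∀ i, ξ i ≤ h ξ i)
    (hna : ∀ t : Fin T, ∀ ξ ∈ U, ∀ ξ' ∈ U,
      (∀ i, τ i ≤ t → ξ i = ξ' i) → ∀ i, τ i ≤ t → h ξ i = h ξ' i)
    (β : ℝ) (hβ : 1 ≤ β)
    (hscale : ∀ ξ ∈ Uhat, β⁻¹ • ξ ∈ U) :
    (ZAR A c D d σ τ U = ⊥ ∧ ZAR A c D d σ τ Uhat = ⊥) ∨
      (0 ≤ ZAR A c D d σ τ U ∧ ZAR A c D d σ τ U ≤ ZAR A c D d σ τ Uhat ∧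
        ZAR A c D d σ τ Uhat ≤ (β : EReal) * ZAR A c D d σ τ U) := by
  have hβ0 : (0:ℝ) < β := lt_of_lt_of_le one_pos hβ
  set S : Set EReal := {z : EReal | ∃ x, Nonanticip σ τ U x ∧ FeasiblePolicy A D d U x ∧
    z = ⨆ ξ : U, ((c ⬝ᵥ x ξ.1 : ℝ) : EReal)} with hSdef
  set Sh : Set EReal := {z : EReal | ∃ x, Nonanticip σ τ Uhat x ∧
    FeasiblePolicy A D d Uhat x ∧ z = ⨆ ξ : Uhat, ((c ⬝ᵥ x ξ.1 : ℝ) : EReal)} with hShdef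
  have hZU : ZAR A c D d σ τ U = sInf S := rfl
  have hZUh : ZAR A c D d σ τ Uhat = sInf Sh := rfl
  -- Step 1 : sInf S ≤ sInf Sh
  have h1 : sInf S ≤ sInf Sh := by
    apply le_sInf
    rintro z ⟨x, hxna, hxf, rfl⟩
    refine sInf_le_of_le (b := ⨆ ξ : U, ((c ⬝ᵥ x (h ξ.1) : ℝ) : EReal))
      ⟨fun ξ => x (h ξ), ?_, ?_, rfl⟩ ?_
    · intro t ξ hξ ξ' hξ' hagree j hj
      exact hxna t (h ξ) (hmap ξ hξ) (h ξ') (hmap ξ' hξ')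
        (fun i hi => hna t ξ hξ ξ' hξ' hagree i hi) j hj
    · intro ξ hξ k
      have hfeas := hxf (h ξ) (hmap ξ hξ) k
      have hmono : D.mulVec ξ k ≤ D.mulVec (h ξ) k := by
        simp only [Matrix.mulVec, dotProduct]
        exact Finset.sum_le_sum fun i _ =>
          mul_le_mul_of_nonneg_left (hdom ξ hξ i) (hD k i)
      linarith
    · exact iSup_le fun ξ => le_iSup_of_le ⟨h ξ.1, hmap _ ξ.2⟩ le_rfl
  -- Step 2 : sInf Sh ≤ β * sInf S
  have h2 : sInf Sh ≤ (β : EReal) * sInf S := by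
    have hmsi : (β : EReal) * sInf S = sInf ((fun z => (β : EReal) * z) '' S) := by
      rw [sInf_image]; exact (erealMulIso β hβ0).map_sInf S
    rw [hmsi]
    apply le_sInf
    rintro w ⟨z, ⟨x, hxna, hxf, rfl⟩, rfl⟩
    refine sInf_le_of_le (b := ⨆ ξ : Uhat, ((c ⬝ᵥ (β • x (β⁻¹ • ξ.1)) : ℝ) : EReal))
      ⟨fun ξ => β • x (β⁻¹ • ξ), ?_, ?_, rfl⟩ ?_
    · intro t ξ hξ ξ' hξ' hagree j hj
      have := hxna t (β⁻¹ • ξ) (hscale ξ hξ) (β⁻¹ • ξ') (hscale ξ' hξ')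
        (fun i hi => by simp only [Pi.smul_apply, smul_eq_mul, hagree i hi]) j hj
      simp only [Pi.smul_apply, smul_eq_mul, this]
    · intro ξ hξ k
      have hfeas := hxf (β⁻¹ • ξ) (hscale ξ hξ) k
      have hDs : D.mulVec (β⁻¹ • ξ) k = β⁻¹ * D.mulVec ξ k := by
        rw [Matrix.mulVec_smul]; simp
      have hAs : A.mulVec (β • x (β⁻¹ • ξ)) k = β * A.mulVec (x (β⁻¹ • ξ)) k := by
        rw [Matrix.mulVec_smul]; simp
      rw [hAs]
      rw [hDs] at hfeas
      have hmul := mul_le_mul_of_nonneg_left hfeas hβ0.le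
      rw [mul_add, ← mul_assoc, mul_inv_cancel₀ hβ0.ne', one_mul] at hmul
      have hdk : d k ≤ β * d k := le_mul_of_one_le_left (hd k) hβ
      linarith
    · apply iSup_le
      intro ξ
      have hcd : (c ⬝ᵥ (β • x (β⁻¹ • ξ.1)) : ℝ) = β * (c ⬝ᵥ x (β⁻¹ • ξ.1)) := by
        rw [dotProduct_smul]; simp
      rw [hcd, EReal.coe_mul]
      exact ereal_mul_le_mul hβ0.le
        (le_iSup_of_le (⟨β⁻¹ • ξ.1, hscale _ ξ.2⟩ : U) le_rfl)
  -- Step 3 : sInf S = ⊥ ∨ 0 ≤ sInf S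
  have h3 : sInf S = ⊥ ∨ 0 ≤ sInf S := by
    by_cases hall : ∀ z ∈ S, 0 ≤ z
    · exact Or.inr (le_sInf hall)
    push_neg at hall
    obtain ⟨z, hzS, hzneg⟩ := hall
    left
    obtain ⟨x, hxna, hxf, rfl⟩ := hzS
    set z := ⨆ ξ : U, ((c ⬝ᵥ x ξ.1 : ℝ) : EReal) with hzdef
    have hAx0 : ∀ ξ ∈ U, ∀ k, 0 ≤ A.mulVec (x ξ) k := by
      intro ξ hξ k
      have := hxf ξ hξ k
      have hDk : 0 ≤ D.mulVec ξ k := by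
        simp only [Matrix.mulVec, dotProduct]
        exact Finset.sum_nonneg fun i _ => mul_nonneg (hD k i) (hU ξ hξ i)
      linarith [hd k]
    by_cases hzbot : z = ⊥
    · have : sInf S ≤ ⊥ := hzbot ▸ sInf_le ⟨x, hxna, hxf, rfl⟩
      exact le_bot_iff.mp this
    · have hztop : z ≠ ⊤ := ne_top_of_lt hzneg
      obtain ⟨r, hr⟩ : ∃ r : ℝ, z = (r : EReal) := ⟨z.toReal, (EReal.coe_toReal hztop hzbot).symm⟩
      have hrneg : r < 0 := by rw [hr] at hzneg; exact_mod_cast hzneg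
      rw [EReal.eq_bot_iff_forall_lt]
      intro M
      obtain ⟨N, hN⟩ := exists_nat_gt (max 1 (M / r))
      set lam : ℝ := (N : ℝ) with hlamdef
      have hlam1 : (1:ℝ) ≤ lam := le_of_lt (lt_of_le_of_lt (le_max_left _ _) hN)
      have hlam0 : (0:ℝ) ≤ lam := le_trans zero_le_one hlam1
      have hlamr : lam * r < M :=
        (div_lt_iff_of_neg hrneg).mp (lt_of_le_of_lt (le_max_right _ _) hN)
      have hmem : (⨆ ξ : U, ((c ⬝ᵥ (lam • x ξ.1) : ℝ) : EReal)) ∈ S := by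
        rw [hSdef]
        refine ⟨fun ξ => lam • x ξ, ?_, ?_, rfl⟩
        · intro t ξ hξ ξ' hξ' hag j hj
          simp only [Pi.smul_apply, smul_eq_mul, hxna t ξ hξ ξ' hξ' hag j hj]
        · intro ξ hξ k
          have hf := hxf ξ hξ k
          have h0 := hAx0 ξ hξ k
          rw [Matrix.mulVec_smul]
          simp only [Pi.smul_apply, smul_eq_mul]
          nlinarith [le_mul_of_one_le_left h0 hlam1]
      have hle : (⨆ ξ : U, ((c ⬝ᵥ (lam • x ξ.1) : ℝ) : EReal)) ≤ ((lam * r : ℝ) : EReal) := by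
        apply iSup_le
        intro ξ
        have h1 : ((c ⬝ᵥ x ξ.1 : ℝ) : EReal) ≤ z := le_iSup_of_le ξ le_rfl
        rw [hr] at h1
        have h1' : (c ⬝ᵥ x ξ.1 : ℝ) ≤ r := by exact_mod_cast h1
        have h2' : (c ⬝ᵥ (lam • x ξ.1) : ℝ) ≤ lam * r := by
          rw [dotProduct_smul]
          simp only [smul_eq_mul]
          exact mul_le_mul_of_nonneg_left h1' hlam0
        exact_mod_cast h2'
      exact lt_of_le_of_lt (le_trans (sInf_le hmem) hle) (by exact_mod_cast hlamr)
  -- Assemble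
  rcases h3 with hbot | hpos
  · left
    refine ⟨hZU.trans hbot, ?_⟩
    have := h2
    rw [hbot, EReal.mul_bot_of_pos (by exact_mod_cast hβ0 : (0:EReal) < (β:EReal))] at this
    exact hZUh.trans (le_bot_iff.mp this)
  · right
    exact ⟨hZU ▸ hpos, by rw [hZU, hZUh]; exact h1, by rw [hZU, hZUh]; exact h2⟩
end

section
/- Let v_0 ∈ ℝ^m_+ and ρ_1,…,ρ_m > 0, set v_i = v_0 + ρ_i e_i for i = 1,…,m and Û = conv(v_0, v_1, …, v_m). Let Z_LP be the optimal value of the linear program: minimize z over z ∈ ℝ and x_0,…,x_m ∈ ℝ^n subject to (a) z ≥ c·x_i for all i ∈ {0,…,m}; (b) A x_i ≥ D v_i + d componentwise for all i; (c) nonanticipativity: for all i, j ∈ {0,…,m} and every stage t, if v_i and v_j agree on every uncertainty coordinate with stage ≤ t, then x_i and x_j agree on every decision coordinate with stage ≤ t. Then Z_LP = Z_AR(Û); in particular, every LP-feasible family (x_i) extends via ξ ↦ Σ_{i=1}^m λ_i(ξ) x_i + (1 − Σ_i λ_i(ξ)) x_0 with λ_i(ξ) = (ξ_i − (v_0)_i)/ρ_i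 to a nonanticipative feasible policy on Û whose worst-case cost is at most max_i c·x_i. -/
open Matrix

/-- Feasibility for the vertex LP: `z` bounds all vertex costs, every vertex solution
is feasible for its vertex, and vertex solutions satisfy nonanticipativity. -/
def LPFeas {l n m T : ℕ} (A : Matrix (Fin l) (Fin n) ℝ) (c : Fin n → ℝ)
    (D : Matrix (Fin l) (Fin m) ℝ) (d : Fin l → ℝ)
    (σ : Fin n → Fin T) (τ : Fin m → Fin T)
    (v : Option (Fin m) → Fin m → ℝ)
    (z : ℝ) (x : Option (Fin m) → Fin n → ℝ) : Prop :=
  (∀ i, c ⬝ᵥ x i ≤ z) ∧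
  (∀ i k, (D.mulVec (v i)) k + d k ≤ (A.mulVec (x i)) k) ∧
  (∀ i j, ∀ t : Fin T, (∀ a, τ a ≤ t → v i a = v j a) → ∀ b, σ b ≤ t → x i b = x j b)

/-- The optimal value of the vertex LP. -/
noncomputable def ZLP {l n m T : ℕ} (A : Matrix (Fin l) (Fin n) ℝ) (c : Fin n → ℝ)
    (D : Matrix (Fin l) (Fin m) ℝ) (d : Fin l → ℝ)
    (σ : Fin n → Fin T) (τ : Fin m → Fin T)
    (v : Option (Fin m) → Fin m → ℝ) : EReal :=
  sInf {w : EReal | ∃ z x, LPFeas A c D d σ τ v z x ∧ w = (z : EReal)}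

/-- **Theorem (Lemma 2: LP on vertices solves the problem on the dominating set).** -/
theorem stmt1 {l n m T : ℕ}
    (A : Matrix (Fin l) (Fin n) ℝ) (c : Fin n → ℝ)
    (D : Matrix (Fin l) (Fin m) ℝ) (d : Fin l → ℝ)
    (hD : ∀ i j, 0 ≤ D i j) (hd : ∀ i, 0 ≤ d i)
    (σ : Fin n → Fin T) (τ : Fin m → Fin T)
    (v0 : Fin m → ℝ) (hv0 : ∀ i, 0 ≤ v0 i)
    (ρ : Fin m → ℝ) (hρ : ∀ i, 0 < ρ i) :
    let v : Option (Fin m) → Fin m → ℝ :=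
      fun o => o.elim v0 (fun i => v0 + ρ i • (Pi.single i (1 : ℝ) : Fin m → ℝ))
    let Uhat : Set (Fin m → ℝ) := convexHull ℝ (Set.range v)
    ZLP A c D d σ τ v = ZAR A c D d σ τ Uhat ∧
    ∀ z x, LPFeas A c D d σ τ v z x →
      let lam : (Fin m → ℝ) → Fin m → ℝ := fun ξ i => (ξ i - v0 i) / ρ i
      let X : (Fin m → ℝ) → Fin n → ℝ := fun ξ b =>
        (∑ i, lam ξ i * x (some i) b) + (1 - ∑ i, lam ξ i) * x none b
      Nonanticip σ τ Uhat X ∧ FeasiblePolicy A D d Uhat X ∧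
        ∀ ξ ∈ Uhat, c ⬝ᵥ X ξ ≤ ⨆ i, c ⬝ᵥ x i := by

  intro v Uhat
  have hρ' : ∀ i : Fin m, (ρ i : ℝ) ≠ 0 := fun i => (hρ i).ne'
  have hvnone : v none = v0 := rfl
  have hvsome : ∀ (i a : Fin m), v (some i) a = v0 a + ρ i * (if a = i then 1 else 0) := by
    intro i a
    have h : v (some i) = v0 + ρ i • (Pi.single i (1:ℝ) : Fin m → ℝ) := rfl
    rw [h]
    simp [Pi.single_apply]
  have hvmem : ∀ i, v i ∈ Uhat := fun i => subset_convexHull ℝ _ ⟨i, rfl⟩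
  have h1 : ∀ (ξ : Fin m → ℝ) (a : Fin m), ξ a = v0 a + (ξ a - v0 a) / ρ a * ρ a := by
    intro ξ a; rw [div_mul_cancel₀ _ (hρ' a)]; ring
  have hlam0 : ∀ i : Fin m, (v none i - v0 i) / ρ i = 0 := by
    intro i; rw [hvnone]; simp
  have hlams : ∀ j i : Fin m, (v (some j) i - v0 i) / ρ i = if i = j then 1 else 0 := by
    intro j i
    rw [hvsome]
    rcases eq_or_ne i j with h | h
    · subst h; simp [hρ' i]
    · simp [h, fun hh => h hh]
  have hS : ∀ ξ ∈ Uhat, (∀ i : Fin m, 0 ≤ (ξ i - v0 i) / ρ i) ∧ (∑ i, (ξ i - v0 i) / ρ i) ≤ 1 := by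
    have hsub : Uhat ⊆ {ξ : Fin m → ℝ |
        (∀ i : Fin m, 0 ≤ (ξ i - v0 i) / ρ i) ∧ (∑ i, (ξ i - v0 i) / ρ i) ≤ 1} := by
      apply convexHull_min
      · rintro _ ⟨i, rfl⟩
        cases i with
        | none =>
          refine ⟨fun i => by rw [hlam0], ?_⟩
          rw [Finset.sum_congr rfl fun i _ => hlam0 i]; simp
        | some j =>
          refine ⟨fun i => by rw [hlams]; split <;> norm_num, ?_⟩
          rw [Finset.sum_congr rfl fun i _ => hlams j i]; simp
      · rintro ξ ⟨h01, hs1⟩ ξ' ⟨h01', hs1'⟩ a b ha hb hab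
        have hl : ∀ i : Fin m, ((a • ξ + b • ξ') i - v0 i) / ρ i
            = a * ((ξ i - v0 i) / ρ i) + b * ((ξ' i - v0 i) / ρ i) := by
          intro i
          have hnum : (a • ξ + b • ξ') i - v0 i = a * (ξ i - v0 i) + b * (ξ' i - v0 i) := by
            simp only [Pi.add_apply, Pi.smul_apply, smul_eq_mul]
            linear_combination (v0 i) * hab
          rw [hnum, add_div, mul_div_assoc, mul_div_assoc]
        constructor
        · intro i
          rw [hl]
          exact add_nonneg (mul_nonneg ha (h01 i)) (mul_nonneg hb (h01' i))
        · rw [Finset.sum_congr rfl fun i _ => hl i, Finset.sum_add_distrib,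
            ← Finset.mul_sum, ← Finset.mul_sum]
          nlinarith [mul_le_mul_of_nonneg_left hs1 ha, mul_le_mul_of_nonneg_left hs1' hb]
    exact fun ξ hξ => hsub hξ
  -- every ξ is the canonical affine combination of the vertices
  have hxi : ∀ ξ : Fin m → ℝ,
      ξ = (∑ i, ((ξ i - v0 i) / ρ i) • v (some i)) + (1 - ∑ i, (ξ i - v0 i) / ρ i) • v none := by
    intro ξ; funext a
    have h2 : ∑ i : Fin m, ((ξ i - v0 i) / ρ i) * (ρ i * (if a = i then 1 else 0))
        = (ξ a - v0 a) / ρ a * ρ a := by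
      rw [Finset.sum_eq_single a]
      · simp
      · intro i _ hi; simp [Ne.symm hi]
      · simp
    simp only [Pi.add_apply, Finset.sum_apply, Pi.smul_apply, smul_eq_mul, hvsome, hvnone]
    simp only [mul_add, Finset.sum_add_distrib, h2, sub_mul, one_mul, ← Finset.sum_mul]
    nth_rewrite 1 [h1 ξ a]
    ring
  -- linearity of mulVec over the canonical combination
  have hMvec : ∀ {q p : ℕ} (M : Matrix (Fin q) (Fin p) ℝ) (y : Option (Fin m) → Fin p → ℝ)
      (μ : Fin m → ℝ) (k : Fin q),
      M.mulVec ((∑ i, μ i • y (some i)) + (1 - ∑ i, μ i) • y none) k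
        = (∑ i, μ i * M.mulVec (y (some i)) k) + (1 - ∑ i, μ i) * M.mulVec (y none) k := by
    intro q p M y μ k
    rw [Matrix.mulVec_add, Matrix.mulVec_smul]
    have : M.mulVec (∑ i, μ i • y (some i)) = ∑ i, μ i • M.mulVec (y (some i)) := by
      rw [← Matrix.mulVecLin_apply, map_sum]
      simp [Matrix.mulVecLin_apply]
    rw [this]
    simp [Finset.sum_apply]
  -- the key properties of the extended policy
  have key : ∀ z x, LPFeas A c D d σ τ v z x →
      Nonanticip σ τ Uhat (fun ξ b =>
        (∑ i, ((ξ i - v0 i) / ρ i) * x (some i) b)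
          + (1 - ∑ i, (ξ i - v0 i) / ρ i) * x none b) ∧
      FeasiblePolicy A D d Uhat (fun ξ b =>
        (∑ i, ((ξ i - v0 i) / ρ i) * x (some i) b)
          + (1 - ∑ i, (ξ i - v0 i) / ρ i) * x none b) ∧
      ∀ ξ ∈ Uhat,
        (c ⬝ᵥ fun b => (∑ i, ((ξ i - v0 i) / ρ i) * x (some i) b)
          + (1 - ∑ i, (ξ i - v0 i) / ρ i) * x none b) ≤ ⨆ i, c ⬝ᵥ x i := by
    intro z x hzx
    obtain ⟨hza, hfeas, hna⟩ := hzx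
    have hXvec : ∀ ξ : Fin m → ℝ,
        (fun b => (∑ i, ((ξ i - v0 i) / ρ i) * x (some i) b)
          + (1 - ∑ i, (ξ i - v0 i) / ρ i) * x none b)
        = (∑ i, ((ξ i - v0 i) / ρ i) • x (some i)) + (1 - ∑ i, (ξ i - v0 i) / ρ i) • x none := by
      intro ξ; funext b; simp [Finset.sum_apply]
    refine ⟨?_, ?_, ?_⟩
    · -- nonanticipativity
      intro t ξ hξ ξ' hξ' hagree b hb
      simp only
      have hform : ∀ η : Fin m → ℝ,
          (∑ i, ((η i - v0 i) / ρ i) * x (some i) b)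
            + (1 - ∑ i, (η i - v0 i) / ρ i) * x none b
          = x none b + ∑ i, ((η i - v0 i) / ρ i) * (x (some i) b - x none b) := by
        intro η
        simp only [mul_sub, Finset.sum_sub_distrib, sub_mul, one_mul, ← Finset.sum_mul]
        ring
      rw [hform, hform]
      congr 1
      apply Finset.sum_congr rfl
      intro i _
      by_cases hi : τ i ≤ t
      · rw [hagree i hi]
      · have hx0 : x (some i) b = x none b := by
          apply hna (some i) none t _ b hb
          intro a ha
          have hai : a ≠ i := fun h => hi (h ▸ ha)
          rw [hvsome, hvnone]
          simp [hai]
        rw [hx0]; ring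
    · -- feasibility
      intro ξ hξ k
      obtain ⟨hpos, hsum⟩ := hS ξ hξ
      have hμ0 : (0:ℝ) ≤ 1 - ∑ i, (ξ i - v0 i) / ρ i := by linarith
      have hDξ : D.mulVec ξ k + d k
          = (∑ i, ((ξ i - v0 i) / ρ i) * (D.mulVec (v (some i)) k + d k))
            + (1 - ∑ i, (ξ i - v0 i) / ρ i) * (D.mulVec (v none) k + d k) := by
        nth_rewrite 1 [hxi ξ]
        rw [hMvec]
        simp only [mul_add, Finset.sum_add_distrib, sub_mul, one_mul, ← Finset.sum_mul]
        ring
      have hAX : A.mulVec (fun b => (∑ i, ((ξ i - v0 i) / ρ i) * x (some i) b)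
            + (1 - ∑ i, (ξ i - v0 i) / ρ i) * x none b) k
          = (∑ i, ((ξ i - v0 i) / ρ i) * A.mulVec (x (some i)) k)
            + (1 - ∑ i, (ξ i - v0 i) / ρ i) * A.mulVec (x none) k := by
        rw [hXvec ξ, hMvec]
      rw [hDξ, hAX]
      refine add_le_add (Finset.sum_le_sum fun i _ => ?_)
        (mul_le_mul_of_nonneg_left (hfeas none k) hμ0)
      exact mul_le_mul_of_nonneg_left (hfeas (some i) k) (hpos i)
    · -- cost bound
      intro ξ hξ
      obtain ⟨hpos, hsum⟩ := hS ξ hξ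
      have hμ0 : (0:ℝ) ≤ 1 - ∑ i, (ξ i - v0 i) / ρ i := by linarith
      set M : ℝ := ⨆ i, c ⬝ᵥ x i with hM
      have hle : ∀ i, c ⬝ᵥ x i ≤ M := fun i => le_ciSup (f := fun i => c ⬝ᵥ x i) (Finite.bddAbove_range _) i
      have hcost : (c ⬝ᵥ fun b => (∑ i, ((ξ i - v0 i) / ρ i) * x (some i) b)
            + (1 - ∑ i, (ξ i - v0 i) / ρ i) * x none b)
          = (∑ i, ((ξ i - v0 i) / ρ i) * (c ⬝ᵥ x (some i)))
            + (1 - ∑ i, (ξ i - v0 i) / ρ i) * (c ⬝ᵥ x none) := by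
        rw [hXvec ξ]
        have h := hMvec (Matrix.of fun _ : Fin 1 => c) x (fun i => (ξ i - v0 i) / ρ i) 0
        simpa [Matrix.mulVec, dotProduct] using h
      rw [hcost]
      calc (∑ i, ((ξ i - v0 i) / ρ i) * (c ⬝ᵥ x (some i)))
            + (1 - ∑ i, (ξ i - v0 i) / ρ i) * (c ⬝ᵥ x none)
          ≤ (∑ i, ((ξ i - v0 i) / ρ i) * M) + (1 - ∑ i, (ξ i - v0 i) / ρ i) * M := by
            refine add_le_add (Finset.sum_le_sum fun i _ =>
              mul_le_mul_of_nonneg_left (hle (some i)) (hpos i))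
              (mul_le_mul_of_nonneg_left (hle none) hμ0)
        _ = M := by rw [← Finset.sum_mul]; ring
  constructor
  · apply le_antisymm
    · -- ZLP ≤ ZAR
      apply le_sInf
      rintro w ⟨Xp, hna, hfe, rfl⟩
      have hne : (Finset.univ : Finset (Option (Fin m))).Nonempty := Finset.univ_nonempty
      have hLP : LPFeas A c D d σ τ v
          (Finset.univ.sup' hne (fun i => c ⬝ᵥ Xp (v i))) (fun i => Xp (v i)) :=
        ⟨fun i => Finset.le_sup' (fun i => c ⬝ᵥ Xp (v i)) (Finset.mem_univ i),
         fun i k => hfe (v i) (hvmem i) k,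
         fun i j t hvt b hb => hna t (v i) (hvmem i) (v j) (hvmem j) hvt b hb⟩
      refine le_trans (sInf_le ⟨_, _, hLP, rfl⟩) ?_
      obtain ⟨i0, -, hi0⟩ := Finset.exists_mem_eq_sup' hne (fun i => c ⬝ᵥ Xp (v i))
      rw [hi0]
      exact le_iSup (fun ξ : Uhat => ((c ⬝ᵥ Xp ξ.1 : ℝ) : EReal)) ⟨v i0, hvmem i0⟩
    · -- ZAR ≤ ZLP
      apply le_sInf
      rintro w ⟨z, x, hzx, rfl⟩
      obtain ⟨hNA, hFP, hCB⟩ := key z x hzx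
      have hmem : (⨆ ξ : Uhat, ((c ⬝ᵥ (fun b =>
            (∑ i, ((ξ.1 i - v0 i) / ρ i) * x (some i) b)
              + (1 - ∑ i, (ξ.1 i - v0 i) / ρ i) * x none b) : ℝ) : EReal))
          ∈ {w : EReal | ∃ X, Nonanticip σ τ Uhat X ∧ FeasiblePolicy A D d Uhat X ∧
              w = ⨆ ξ : Uhat, ((c ⬝ᵥ X ξ.1 : ℝ) : EReal)} :=
        ⟨_, hNA, hFP, rfl⟩
      refine (sInf_le hmem).trans ?_
      apply iSup_le
      intro ξ
      rw [EReal.coe_le_coe_iff]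
      exact (hCB ξ.1 ξ.2).trans (ciSup_le fun i => hzx.1 i)
  · intro z x hzx
    intro lam X
    exact key z x hzx
end

section
/- Let U ⊆ ℝ^m_+, v_0 ∈ ℝ^m_+ and ρ_1,…,ρ_m > 0, set v_i = v_0 + ρ_i e_i and Û = conv(v_0, …, v_m). Define h(ξ) = (ξ − v_0)_+ + v_0 and λ_i(ξ) = ((ξ − v_0)_+)_i / ρ_i. Then for every ξ ∈ U: (i) h(ξ) ≥ ξ componentwise; (ii) h(ξ) = Σ_{i=1}^m λ_i(ξ) v_i + (1 − Σ_{i=1}^m λ_i(ξ)) v_0, with λ_i(ξ) ≥ 0; (iii) if sup_{ξ∈U} Σ_{i=1}^m λ_i(ξ) ≤ 1, then h(ξ) ∈ Û for every ξ ∈ U, so h is a domination function; moreover each coordinate h(ξ)_i depends only on ξ_i, so h is nonanticipative for any stage assignment. -/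
/-- **Properties of the domination function `h(ξ) = (ξ − v₀)₊ + v₀`.** -/
theorem stmt2 {m : ℕ} (U : Set (Fin m → ℝ)) (hU : ∀ ξ ∈ U, ∀ i, 0 ≤ ξ i)
    (v0 : Fin m → ℝ) (hv0 : ∀ i, 0 ≤ v0 i)
    (ρ : Fin m → ℝ) (hρ : ∀ i, 0 < ρ i) :
    let v : Option (Fin m) → Fin m → ℝ :=
      fun o => o.elim v0 (fun i => v0 + ρ i • (Pi.single i (1 : ℝ) : Fin m → ℝ))
    let h : (Fin m → ℝ) → Fin m → ℝ := fun ξ i => max (ξ i - v0 i) 0 + v0 i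
    let lam : (Fin m → ℝ) → Fin m → ℝ := fun ξ i => max (ξ i - v0 i) 0 / ρ i
    -- (i) h(ξ) ≥ ξ componentwise
    (∀ ξ ∈ U, ∀ i, ξ i ≤ h ξ i) ∧
    -- (ii) h(ξ) is the asserted combination of the vertices, with λᵢ(ξ) ≥ 0
    (∀ ξ ∈ U, (∀ i, 0 ≤ lam ξ i) ∧
      h ξ = (∑ i, lam ξ i • v (some i)) + (1 - ∑ i, lam ξ i) • v none) ∧
    -- (iii) if the λ's always sum to at most 1, then h maps U into Û
    ((∀ ξ ∈ U, (∑ i, lam ξ i) ≤ 1) →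
      ∀ ξ ∈ U, h ξ ∈ convexHull ℝ (Set.range v)) ∧
    -- each coordinate of h(ξ) depends only on the same coordinate of ξ
    (∀ ξ ξ' : Fin m → ℝ, ∀ i, ξ i = ξ' i → h ξ i = h ξ' i) := by
  intro v h lam
  have hlam : ∀ ξ : Fin m → ℝ, ∀ i, 0 ≤ lam ξ i := fun ξ i =>
    div_nonneg (le_max_right _ _) (hρ i).le
  have key : ∀ ξ : Fin m → ℝ,
      h ξ = (∑ i, lam ξ i • v (some i)) + (1 - ∑ i, lam ξ i) • v none := by
    intro ξ
    funext j
    simp only [h, lam, v, Option.elim, Pi.add_apply, Pi.smul_apply, Finset.sum_apply,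
      smul_eq_mul, Pi.single_apply]
    have hsum : ∀ i : Fin m, (max (ξ i - v0 i) 0 / ρ i) * (v0 j + ρ i * (if j = i then (1:ℝ) else 0))
        = (max (ξ i - v0 i) 0 / ρ i) * v0 j + (if j = i then max (ξ i - v0 i) 0 else 0) := by
      intro i
      rcases eq_or_ne j i with rfl | hne
      · simp [mul_add, div_mul_cancel₀, (hρ j).ne']
      · simp [hne]
    rw [Finset.sum_congr rfl (fun i _ => hsum i)]
    rw [Finset.sum_add_distrib, Finset.sum_ite_eq Finset.univ j (fun i => max (ξ i - v0 i) 0)]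
    simp only [Finset.mem_univ, if_true]
    rw [← Finset.sum_mul]
    ring
  refine ⟨fun ξ _ i => by simp only [h]; nlinarith [le_max_left (ξ i - v0 i) 0],
    fun ξ _ => ⟨hlam ξ, key ξ⟩, fun hle ξ hξ => ?_,
    fun ξ ξ' i hi => by simp only [h, hi]⟩
  rw [key ξ]
  have := (convex_convexHull ℝ (Set.range v)).sum_mem
    (t := (Finset.univ : Finset (Option (Fin m))))
    (w := fun o => o.elim (1 - ∑ i, lam ξ i) (lam ξ))
    (z := v) ?_ ?_ ?_
  · rwa [Fintype.sum_option, add_comm] at this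
  · rintro (_ | i) _
    · exact sub_nonneg.2 (hle ξ hξ)
    · exact hlam ξ i
  · rw [Fintype.sum_option]
    simp only [Option.elim, lam, div_eq_mul_inv]
    ring
  · exact fun o _ => subset_convexHull ℝ _ ⟨o, rfl⟩
end

section
/- Let U ⊆ [0,1]^m be nonempty, compact, convex, down-monotone (i.e., ξ ∈ U and 0 ≤ ξ' ≤ ξ imply ξ' ∈ U), and invariant under all coordinate permutations, and let μ ≥ 0. Define γ(j) = (1/j)·max_{ξ∈U} Σ_{i=1}^j ξ_i for j ∈ {1,…,m}. Then max_{ξ∈U} Σ_{i=1}^m (ξ_i − μ)_+ = max_{j∈{1,…,m}} j·(γ(j) − μ)_+; in particular, for some j ∈ {1,…,m}, the vector ξ* = γ(j)·Σ_{i=1}^j e_i lies in U and attains the maximum of Σ_{i=1}^m (ξ_i − μ)_+ over U. -/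
/-!
Write `v_j` for the vector equal to `γ(j)` on the first `j` coordinates and to `0` elsewhere.
Each `v_j` lies in `U`: truncate a maximiser of `ξ₁ + ⋯ + ξ_j` to its first `j` coordinates
(down-monotonicity) and average its cyclic rotations (permutation invariance and convexity).
Its objective value is `j (γ(j) − μ)₊`. Conversely, if `ξ ∈ U` has exactly `j` coordinates above
`μ`, permuting them to the front shows that their sum is at most `j γ(j)`, so the objective at
`ξ` is at most `j (γ(j) − μ)₊`. Hence the best `v_j` is a maximiser.
-/

/-- `γ j` is the maximal average value of the first `j` components of any `ξ ∈ U`. -/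
noncomputable def gammaU {m : ℕ} (U : Set (Fin m → ℝ)) (j : ℕ) : ℝ :=
  (1 / (j : ℝ)) *
    sSup ((fun ξ : Fin m → ℝ => ∑ i ∈ Finset.univ.filter (fun i : Fin m => (i : ℕ) < j), ξ i) '' U)

open Finset

section

variable {ι : Type*}

theorem Finset.exists_perm_mem_iff_of_card_eq [Fintype ι] [DecidableEq ι] {s t : Finset ι}
    (h : #s = #t) :
    ∃ π : Equiv.Perm ι, ∀ i, i ∈ s ↔ π i ∈ t := by
  obtain ⟨e⟩ : Nonempty ({i // i ∈ s} ≃ {i // i ∈ t}) := by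
    rw [← Fintype.card_eq]
    simpa using h
  exact ⟨e.extendSubtype, fun i =>
    ⟨e.extendSubtype_mem i, not_imp_not.1 (e.extendSubtype_not_mem i)⟩⟩

theorem Convex.ite_average_mem_of_perm_invariant [DecidableEq ι] {U : Set (ι → ℝ)}
    (hconv : Convex ℝ U) (hperm : ∀ π : Equiv.Perm ι, ∀ ξ ∈ U, (fun i => ξ (π i)) ∈ U)
    {s : Finset ι} (hs : s.Nonempty) {ζ : ι → ℝ} (hζ : ζ ∈ U) (hsupp : ∀ i ∉ s, ζ i = 0) :
    (fun i => if i ∈ s then (∑ i ∈ s, ζ i) / #s else 0) ∈ U := by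
  have : NeZero #s := ⟨hs.card_ne_zero⟩
  let e : Fin #s ≃ {i // i ∈ s} := s.equivFin.symm
  let rot (k : Fin #s) : Equiv.Perm ι := (Equiv.addRight k).extendDomain e
  have hsum (i : ι) : ∑ k, ζ (rot k i) = if i ∈ s then ∑ i ∈ s, ζ i else 0 := by
    by_cases hi : i ∈ s
    · have hrot (k : Fin #s) : rot k i = e (e.symm ⟨i, hi⟩ + k) :=
        Equiv.Perm.extendDomain_apply_subtype _ e hi
      simp only [hrot, if_pos hi]
      exact (Equiv.sum_comp (Equiv.addLeft (e.symm ⟨i, hi⟩)) fun b => ζ (e b)).trans <|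
        (Equiv.sum_comp e fun x => ζ x).trans (sum_coe_sort s ζ)
    · simp [rot, Equiv.Perm.extendDomain_apply_not_subtype _ e hi, hsupp i hi, hi]
  have hmem : ∑ k : Fin #s, (1 / (#s : ℝ)) • (fun i => ζ (rot k i)) ∈ U :=
    hconv.sum_mem (fun _ _ => by positivity) (by simp) fun k _ => hperm (rot k) ζ hζ
  convert hmem using 1
  ext i
  simp only [Finset.sum_apply, Pi.smul_apply, smul_eq_mul, ← mul_sum, hsum]
  split_ifs
  · field_simp
  · simp

theorem sum_max_sub_zero_eq [Fintype ι] (ξ : ι → ℝ) (μ : ℝ) :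
    ∑ i, max (ξ i - μ) 0 = ∑ i with μ < ξ i, ξ i - #{i | μ < ξ i} * μ := by
  rw [← nsmul_eq_mul, ← sum_const, ← sum_sub_distrib, sum_filter]
  refine sum_congr rfl fun i _ => ?_
  split_ifs with h
  · exact max_eq_left (by linarith)
  · exact max_eq_right (by linarith)

theorem sum_max_ite_sub_zero [Fintype ι] (p : ι → Prop) [DecidablePred p] {μ : ℝ} (hμ : 0 ≤ μ)
    (c : ℝ) : ∑ i, max ((if p i then c else 0) - μ) 0 = #{i | p i} * max (c - μ) 0 := by
  have (i : ι) : max ((if p i then c else 0) - μ) 0 = if p i then max (c - μ) 0 else 0 := by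
    split_ifs
    · rfl
    · exact max_eq_right (by linarith)
  simp only [this, sum_ite, sum_const_zero, add_zero, sum_const, nsmul_eq_mul]

end

theorem exists_isGreatest_image_of_forall_le {α β γ : Type*} [LinearOrder γ] {f : α → γ}
    {g : β → γ} {U : Set α} {J : Set β} (v : β → α) (hJ : J.Finite) (hJne : J.Nonempty)
    (hv : ∀ j ∈ J, v j ∈ U ∧ f (v j) = g j) (hle : ∀ ξ ∈ U, ∃ j ∈ J, f ξ ≤ g j) :
    ∃ j ∈ J, v j ∈ U ∧ IsGreatest (f '' U) (g j) ∧ IsGreatest (g '' J) (g j) := by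
  obtain ⟨j, hj, hmax⟩ := Set.exists_max_image J g hJ hJne
  refine ⟨j, hj, (hv j hj).1, ⟨⟨v j, hv j hj⟩, ?_⟩, ⟨⟨j, hj, rfl⟩, ?_⟩⟩
  · rintro _ ⟨ξ, hξ, rfl⟩
    obtain ⟨k, hk, hξk⟩ := hle ξ hξ
    exact hξk.trans (hmax k hk)
  · rintro _ ⟨k, hk, rfl⟩
    exact hmax k hk

def initialCoords (m j : ℕ) : Finset (Fin m) := {i | (i : ℕ) < j}

theorem card_initialCoords {m j : ℕ} (h : j ≤ m) : #(initialCoords m j) = j := by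
  rw [initialCoords, Fin.card_filter_val_lt, min_eq_right h]

section GammaU

variable {m : ℕ} {U : Set (Fin m → ℝ)}

theorem exists_sum_initialCoords_eq_mul_gammaU (hne : U.Nonempty) (hcomp : IsCompact U)
    {j : ℕ} (hj : j ≠ 0) :
    ∃ ζ ∈ U, ∑ i ∈ initialCoords m j, ζ i = j * gammaU U j ∧
      ∀ ξ ∈ U, ∑ i ∈ initialCoords m j, ξ i ≤ j * gammaU U j := by
  have hcont : Continuous fun ξ : Fin m → ℝ => ∑ i ∈ initialCoords m j, ξ i := by fun_prop
  obtain ⟨_, hgreatest⟩ := (hcomp.image hcont).exists_isGreatest (hne.image _)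
  obtain ⟨ζ, hζ, rfl⟩ := hgreatest.1
  have hmul : (j : ℝ) * gammaU U j = ∑ i ∈ initialCoords m j, ζ i := by
    rw [gammaU, ← mul_assoc, mul_one_div_cancel (by exact_mod_cast hj), one_mul]
    exact hgreatest.csSup_eq
  exact ⟨ζ, hζ, hmul.symm, fun ξ hξ => hmul ▸ hgreatest.2 ⟨ξ, hξ, rfl⟩⟩

theorem ite_gammaU_mem (hne : U.Nonempty) (hcomp : IsCompact U) (hconv : Convex ℝ U)
    (hnonneg : ∀ ξ ∈ U, ∀ i, 0 ≤ ξ i)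
    (hdown : ∀ ξ ∈ U, ∀ ξ' : Fin m → ℝ, (∀ i, 0 ≤ ξ' i) → (∀ i, ξ' i ≤ ξ i) → ξ' ∈ U)
    (hperm : ∀ π : Equiv.Perm (Fin m), ∀ ξ ∈ U, (fun i => ξ (π i)) ∈ U)
    {j : ℕ} (hj : j ∈ Set.Icc 1 m) :
    (fun i : Fin m => if (i : ℕ) < j then gammaU U j else 0) ∈ U := by
  have hj0 : j ≠ 0 := by grind
  obtain ⟨ζ, hζ, hζsum, -⟩ := exists_sum_initialCoords_eq_mul_gammaU hne hcomp hj0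
  set s := initialCoords m j
  have hcard : #s = j := card_initialCoords hj.2
  let ζ' : Fin m → ℝ := fun i => if i ∈ s then ζ i else 0
  have hζ' : ζ' ∈ U := by
    refine hdown ζ hζ ζ' (fun i => ?_) (fun i => ?_) <;>
      by_cases hi : i ∈ s <;> simp [ζ', hi, hnonneg ζ hζ i]
  have hsum : ∑ i ∈ s, ζ' i = j * gammaU U j := by
    rw [← hζsum]
    exact sum_congr rfl fun i hi => if_pos hi
  have hs : s.Nonempty := card_pos.1 (by omega)
  convert hconv.ite_average_mem_of_perm_invariant hperm hs hζ' (fun i hi => if_neg hi) using 3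
  · simp [s, initialCoords]
  · rw [hsum, hcard]
    field_simp

theorem exists_sum_max_sub_zero_le_mul_gammaU (hcomp : IsCompact U)
    (hperm : ∀ π : Equiv.Perm (Fin m), ∀ ξ ∈ U, (fun i => ξ (π i)) ∈ U) (hm : 1 ≤ m) (μ : ℝ)
    {ξ : Fin m → ℝ} (hξ : ξ ∈ U) :
    ∃ j ∈ Set.Icc 1 m, ∑ i, max (ξ i - μ) 0 ≤ j * max (gammaU U j - μ) 0 := by
  rw [sum_max_sub_zero_eq]
  set S : Finset (Fin m) := {i | μ < ξ i}
  by_cases hS : #S = 0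
  · refine ⟨1, ⟨le_rfl, hm⟩, ?_⟩
    simp only [card_eq_zero.1 hS, sum_empty, card_empty, Nat.cast_zero, Nat.cast_one, zero_mul,
      sub_zero, one_mul]
    exact le_max_right _ _
  have hSm : #S ≤ m := (card_le_univ S).trans_eq (Fintype.card_fin m)
  obtain ⟨π, hπ⟩ := exists_perm_mem_iff_of_card_eq (card_initialCoords hSm)
  obtain ⟨-, -, -, hle⟩ := exists_sum_initialCoords_eq_mul_gammaU ⟨ξ, hξ⟩ hcomp hS
  have hsum : ∑ i ∈ initialCoords m #S, ξ (π i) = ∑ i ∈ S, ξ i :=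
    sum_equiv π hπ fun _ _ => rfl
  refine ⟨#S, ⟨Nat.one_le_iff_ne_zero.2 hS, hSm⟩, ?_⟩
  calc ∑ i ∈ S, ξ i - #S * μ ≤ #S * gammaU U #S - #S * μ := by
        linarith [hsum ▸ hle _ (hperm π ξ hξ)]
    _ = #S * (gammaU U #S - μ) := by ring
    _ ≤ #S * max (gammaU U #S - μ) 0 := by gcongr; exact le_max_left _ _

end GammaU

/-- **(Lemma 4 of Ben-Tal et al. 2020.)** For a permutation-invariant, compact, convex,
down-monotone `U ⊆ [0,1]^m` and `μ ≥ 0`, the maximum of `Σᵢ (ξᵢ − μ)₊` over `U` equals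
`max_{1 ≤ j ≤ m} j (γ(j) − μ)₊`, and it is attained at a vector that is constant equal
to `γ(j)` on its first `j` components and zero elsewhere. -/
theorem stmt3 {m : ℕ} (hm : 1 ≤ m) (U : Set (Fin m → ℝ)) (hne : U.Nonempty)
    (hcomp : IsCompact U) (hconv : Convex ℝ U)
    (hbox : ∀ ξ ∈ U, ∀ i, 0 ≤ ξ i ∧ ξ i ≤ 1)
    (hdown : ∀ ξ ∈ U, ∀ ξ' : Fin m → ℝ, (∀ i, 0 ≤ ξ' i) → (∀ i, ξ' i ≤ ξ i) → ξ' ∈ U)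
    (hperm : ∀ π : Equiv.Perm (Fin m), ∀ ξ ∈ U, (fun i => ξ (π i)) ∈ U)
    (μ : ℝ) (hμ : 0 ≤ μ) :
    sSup ((fun ξ : Fin m → ℝ => ∑ i, max (ξ i - μ) 0) '' U) =
      sSup ((fun j : ℕ => (j : ℝ) * max (gammaU U j - μ) 0) '' Set.Icc 1 m) ∧
    ∃ j ∈ Set.Icc 1 m,
      (fun i : Fin m => if (i : ℕ) < j then gammaU U j else 0) ∈ U ∧
      ∀ ξ ∈ U, (∑ i, max (ξ i - μ) 0) ≤
        ∑ i : Fin m, max ((if (i : ℕ) < j then gammaU U j else 0) - μ) 0 := by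
  have hval (j : ℕ) (hj : j ∈ Set.Icc 1 m) :
      ∑ i : Fin m, max ((if (i : ℕ) < j then gammaU U j else 0) - μ) 0 =
        j * max (gammaU U j - μ) 0 := by
    rw [sum_max_ite_sub_zero _ hμ, Fin.card_filter_val_lt, min_eq_right hj.2]
  obtain ⟨j, hj, hmem, hgreatestU, hgreatestJ⟩ :=
    exists_isGreatest_image_of_forall_le (f := fun ξ : Fin m → ℝ => ∑ i, max (ξ i - μ) 0)
      (fun j i => if (i : ℕ) < j then gammaU U j else 0) (Set.finite_Icc 1 m)
      (Set.nonempty_Icc.2 hm)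
      (fun j hj =>
        ⟨ite_gammaU_mem hne hcomp hconv (fun ξ hξ i => (hbox ξ hξ i).1) hdown hperm hj, hval j hj⟩)
      (fun ξ hξ => exists_sum_max_sub_zero_le_mul_gammaU hcomp hperm hm μ hξ)
  refine ⟨hgreatestU.csSup_eq.trans hgreatestJ.csSup_eq.symm, j, hj, hmem, fun ξ hξ => ?_⟩
  rw [hval j hj]
  exact hgreatestU.2 ⟨ξ, hξ, rfl⟩
end

section
/- Let m ≥ 1 and U = {ξ ∈ ℝ^m_+ : ‖ξ‖₂ ≤ 1} be the nonnegative hypersphere uncertainty set. Set μ = 1/(2·m^{1/4}), ρ = m^{1/4}/2, v_0 = μ·e (e the all-ones vector), v_i = v_0 + ρ·e_i for i = 1,…,m, and β = √((√m + 1)/2). Then: (i) for every ξ ∈ U, Σ_{i=1}^m (ξ_i − μ)_+ ≤ ρ, so Û = conv(v_0,…,v_m) dominates U via the map h(ξ) = (ξ − v_0)_+ + v_0; and (ii) ‖v_i‖₂ ≤ β for every i ∈ {0,…,m}, so (1/β)·ξ̂ ∈ U for every ξ̂ ∈ Û. -/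
lemma convexU {m : ℕ} :
    Convex ℝ {ξ : Fin m → ℝ | (∀ i, 0 ≤ ξ i) ∧ Real.sqrt (∑ i, ξ i ^ 2) ≤ 1} := by
  intro x hx y hy a b ha hb hab
  obtain ⟨hx0, hx1⟩ := hx
  obtain ⟨hy0, hy1⟩ := hy
  have hxs : (0:ℝ) ≤ ∑ i, x i ^ 2 := Finset.sum_nonneg fun i _ => sq_nonneg _
  have hys : (0:ℝ) ≤ ∑ i, y i ^ 2 := Finset.sum_nonneg fun i _ => sq_nonneg _
  have hx1' : ∑ i, x i ^ 2 ≤ 1 := by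
    nlinarith [Real.sq_sqrt hxs, Real.sqrt_nonneg (∑ i, x i ^ 2)]
  have hy1' : ∑ i, y i ^ 2 ≤ 1 := by
    nlinarith [Real.sq_sqrt hys, Real.sqrt_nonneg (∑ i, y i ^ 2)]
  constructor
  · intro i
    have := hx0 i; have := hy0 i
    have : (0:ℝ) ≤ a * x i + b * y i := by positivity
    simpa using this
  · have hcs : (∑ i, x i * y i) ^ 2 ≤ (∑ i, x i ^ 2) * (∑ i, y i ^ 2) :=
      Finset.sum_mul_sq_le_sq_mul_sq _ _ _
    have hcs1 : ∑ i, x i * y i ≤ 1 := by nlinarith [sq_nonneg (∑ i, x i * y i)]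
    have hsum : ∑ i, (a • x + b • y) i ^ 2
        = a^2 * (∑ i, x i ^ 2) + 2*a*b* (∑ i, x i * y i) + b^2 * (∑ i, y i ^ 2) := by
      have e : ∀ i, (a • x + b • y) i ^ 2
          = a^2 * x i^2 + 2*a*b*(x i * y i) + b^2 * y i^2 := by
        intro i; simp only [Pi.add_apply, Pi.smul_apply, smul_eq_mul]; ring
      simp_rw [e]
      rw [Finset.sum_add_distrib, Finset.sum_add_distrib, ← Finset.mul_sum,
        ← Finset.mul_sum, ← Finset.mul_sum]
    have h1 : ∑ i, (a • x + b • y) i ^ 2 ≤ 1 := by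
      rw [hsum]
      nlinarith [mul_le_mul_of_nonneg_left hx1' (sq_nonneg a),
        mul_le_mul_of_nonneg_left hy1' (sq_nonneg b),
        mul_le_mul_of_nonneg_left hcs1 (by positivity : (0:ℝ) ≤ 2*a*b)]
    calc Real.sqrt (∑ i, (a • x + b • y) i ^ 2) ≤ Real.sqrt 1 := Real.sqrt_le_sqrt h1
    _ = 1 := Real.sqrt_one

set_option maxHeartbeats 1000000 in
/-- **Proposition (hypersphere uncertainty).** For the nonnegative hypersphere
`U = {ξ ≥ 0 : ‖ξ‖₂ ≤ 1}`, with `μ = 1/(2 m^{1/4})`, `ρ = m^{1/4}/2`,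
`v₀ = μ·e`, `vᵢ = v₀ + ρ eᵢ`, and `β = √((√m + 1)/2)`:
(i) `Σᵢ (ξᵢ − μ)₊ ≤ ρ` for all `ξ ∈ U`, so `Û = conv(v₀,…,v_m)` dominates `U` via
`h(ξ) = (ξ − v₀)₊ + v₀`; (ii) `‖vᵢ‖₂ ≤ β` for all `i`, so `(1/β)·ξ̂ ∈ U` for all `ξ̂ ∈ Û`. -/
theorem stmt4 {m : ℕ} (hm : 1 ≤ m) :
    let U : Set (Fin m → ℝ) :=
      {ξ | (∀ i, 0 ≤ ξ i) ∧ Real.sqrt (∑ i, ξ i ^ 2) ≤ 1}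
    let μ : ℝ := 1 / (2 * (m : ℝ) ^ ((1 : ℝ) / 4))
    let ρ : ℝ := (m : ℝ) ^ ((1 : ℝ) / 4) / 2
    let β : ℝ := Real.sqrt ((Real.sqrt m + 1) / 2)
    let v : Option (Fin m) → Fin m → ℝ :=
      fun o => o.elim (fun _ => μ) (fun i => (fun _ => μ) + ρ • (Pi.single i (1 : ℝ) : Fin m → ℝ))
    let h : (Fin m → ℝ) → Fin m → ℝ := fun ξ i => max (ξ i - μ) 0 + μ
    -- (i)
    (∀ ξ ∈ U, (∑ i, max (ξ i - μ) 0) ≤ ρ) ∧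
    (∀ ξ ∈ U, (∀ i, ξ i ≤ h ξ i) ∧ h ξ ∈ convexHull ℝ (Set.range v)) ∧
    -- (ii)
    (∀ i, Real.sqrt (∑ k, v i k ^ 2) ≤ β) ∧
    (∀ ξhat ∈ convexHull ℝ (Set.range v), β⁻¹ • ξhat ∈ U) := by
  intro U μ ρ β v h
  have hm1 : (1:ℝ) ≤ (m:ℝ) := by exact_mod_cast hm
  set s : ℝ := (m:ℝ) ^ ((1:ℝ)/4) with hs_def
  have hs0 : (0:ℝ) < s := Real.rpow_pos_of_pos (by linarith) _
  have hs2 : s * s = Real.sqrt m := by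
    rw [hs_def, ← Real.rpow_add (by linarith), Real.sqrt_eq_rpow]
    norm_num
  have hsq1 : (1:ℝ) ≤ Real.sqrt m := by
    rw [show (1:ℝ) = Real.sqrt 1 by simp]; exact Real.sqrt_le_sqrt hm1
  have hms : (m:ℝ) = Real.sqrt m * Real.sqrt m := (Real.mul_self_sqrt (by linarith)).symm
  have hμ : μ = 1 / (2*s) := rfl
  have hρ : ρ = s / 2 := rfl
  have hμ0 : 0 < μ := by rw [hμ]; positivity
  have hρ0 : 0 < ρ := by rw [hρ]; positivity
  have hβdef : β = Real.sqrt ((Real.sqrt m + 1) / 2) := rfl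
  clear_value μ ρ β s
  -- part (i), first claim
  have key : ∀ ξ ∈ U, (∑ i, max (ξ i - μ) 0) ≤ ρ := by
    intro ξ hξ
    obtain ⟨hξ0, hξ1⟩ := hξ
    have hss : (0:ℝ) ≤ ∑ i, ξ i ^ 2 := Finset.sum_nonneg fun i _ => sq_nonneg _
    have hsum1 : ∑ i, ξ i ^ 2 ≤ 1 := by
      nlinarith [Real.sq_sqrt hss, Real.sqrt_nonneg (∑ i, ξ i ^ 2)]
    have hterm : ∀ i, max (ξ i - μ) 0 ≤ ξ i ^ 2 / (4*μ) := by
      intro i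
      apply max_le
      · rw [div_eq_inv_mul, ← sub_nonneg]
        have : (4*μ)⁻¹ * (ξ i)^2 - (ξ i - μ) = (4*μ)⁻¹ * (ξ i - 2*μ)^2 := by
          field_simp; ring
        rw [this]; positivity
      · positivity
    calc (∑ i, max (ξ i - μ) 0) ≤ ∑ i, ξ i ^ 2 / (4*μ) :=
          Finset.sum_le_sum fun i _ => hterm i
      _ = (∑ i, ξ i ^ 2) / (4*μ) := by rw [Finset.sum_div]
      _ ≤ 1 / (4*μ) := by gcongr
      _ = ρ := by rw [hμ, hρ]; field_simp; ring
  -- part (iii)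
  have norm_v : ∀ i, Real.sqrt (∑ k, v i k ^ 2) ≤ β := by
    intro o
    have hcard : (Finset.univ : Finset (Fin m)).card = m := by simp
    match o with
    | none =>
      have : ∑ k, v none k ^ 2 = m * μ^2 := by
        simp [v, Finset.sum_const, hcard]
      rw [this, hβdef]
      apply Real.sqrt_le_sqrt
      have hs0' : s ≠ 0 := ne_of_gt hs0
      have e : (m:ℝ) * μ^2 = Real.sqrt m / 4 := by
        rw [hμ]; field_simp; nlinarith [hs2, hms]
      rw [e]
      linarith [Real.sqrt_nonneg (m:ℝ)]
    | some i =>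
      have hsq : ∀ k, ((Pi.single i 1 : Fin m → ℝ) k)^2 = (Pi.single i 1 : Fin m → ℝ) k := by
        intro k
        rcases eq_or_ne k i with rfl | hk
        · simp
        · simp [Pi.single_eq_of_ne hk]
      have hssum : ∑ k, (Pi.single i 1 : Fin m → ℝ) k = 1 := by
        simp [Finset.sum_pi_single']
      have hexp : ∑ k, v (some i) k ^ 2 = m * μ^2 + 2*μ*ρ + ρ^2 := by
        have e : ∀ k, v (some i) k ^ 2
            = μ^2 + (2*μ*ρ + ρ^2) * (Pi.single i 1 : Fin m → ℝ) k := by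
          intro k
          have : v (some i) k = μ + ρ * (Pi.single i 1 : Fin m → ℝ) k := by
            simp [v]
          rw [this]
          have := hsq k
          nlinarith [hsq k]
        simp_rw [e]
        rw [Finset.sum_add_distrib, ← Finset.mul_sum, hssum, Finset.sum_const, hcard]
        simp; ring
      rw [hexp, hβdef]
      apply Real.sqrt_le_sqrt
      have hs0' : s ≠ 0 := ne_of_gt hs0
      have e : (m:ℝ) * μ^2 + 2*μ*ρ + ρ^2 = (Real.sqrt m + 1)/2 := by
        rw [hμ, hρ]; field_simp; nlinarith [hs2, hms]
      rw [e]
  -- part (ii), second claim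
  have dom : ∀ ξ ∈ U, (∀ i, ξ i ≤ h ξ i) ∧ h ξ ∈ convexHull ℝ (Set.range v) := by
    intro ξ hξ
    constructor
    · intro i
      have := le_max_left (ξ i - μ) 0
      show ξ i ≤ max (ξ i - μ) 0 + μ
      linarith
    · set w : Fin m → ℝ := fun i => max (ξ i - μ) 0 with hw_def
      have hw0 : ∀ i, 0 ≤ w i := fun i => le_max_right _ _
      have hwρ : ∑ i, w i ≤ ρ := key ξ hξ
      have hwsum0 : 0 ≤ ∑ i, w i := Finset.sum_nonneg fun i _ => hw0 i
      set t : Option (Fin m) → ℝ :=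
        fun o => o.elim (1 - (∑ i, w i)/ρ) (fun i => w i / ρ) with ht_def
      have ht0 : ∀ o, 0 ≤ t o := by
        intro o
        match o with
        | none =>
          simp only [ht_def, Option.elim]
          rw [sub_nonneg, div_le_one hρ0]; exact hwρ
        | some i => exact div_nonneg (hw0 i) hρ0.le
      have htsum : ∑ o : Option (Fin m), t o = 1 := by
        rw [Fintype.sum_option]
        simp only [ht_def, Option.elim]
        rw [← Finset.sum_div]
        ring
      have heq : h ξ = ∑ o : Option (Fin m), t o • v o := by
        funext k
        have happ : (∑ o : Option (Fin m), t o • v o) k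
            = ∑ o : Option (Fin m), t o * v o k := by
          simp [Finset.sum_apply]
        rw [happ, Fintype.sum_option]
        have hvs : ∀ i, v (some i) k = μ + ρ * (Pi.single i 1 : Fin m → ℝ) k := by
          intro i; simp [v]
        simp only [ht_def, Option.elim]
        simp_rw [hvs]
        have e : ∀ i, w i / ρ * (μ + ρ * (Pi.single i 1 : Fin m → ℝ) k)
            = (w i / ρ) * μ + w i * (Pi.single i 1 : Fin m → ℝ) k := by
          intro i; field_simp
        simp_rw [e]
        rw [Finset.sum_add_distrib]
        have h1 : ∑ i, w i * (Pi.single i 1 : Fin m → ℝ) k = w k := by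
          simp [Pi.single_apply, Finset.sum_ite_eq]
        have h2 : ∑ i, w i / ρ * μ = ((∑ i, w i)/ρ) * μ := by
          rw [← Finset.sum_mul, ← Finset.sum_div]
        rw [h1, h2]
        have hv0k : v none k = μ := rfl
        have hwk : w k = max (ξ k - μ) 0 := rfl
        rw [hv0k, hwk]
        show max (ξ k - μ) 0 + μ = _
        ring
      rw [heq]
      have hmem := Finset.centerMass_mem_convexHull (Finset.univ)
        (fun o _ => ht0 o) (by rw [htsum]; norm_num)
        (fun o _ => Set.mem_range_self (f := v) o)
      rwa [Finset.centerMass_eq_of_sum_1 _ _ htsum] at hmem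
  -- part (iv)
  have hβ0 : 0 < β := by rw [hβdef]; exact Real.sqrt_pos.mpr (by positivity)
  refine ⟨key, dom, norm_v, ?_⟩
  intro ξhat hmem
  have hsub : convexHull ℝ (Set.range v) ⊆ {x : Fin m → ℝ | β⁻¹ • x ∈ U} := by
    apply convexHull_min
    · rintro _ ⟨o, rfl⟩
      constructor
      · intro k
        have hv0 : 0 ≤ v o k := by
          match o with
          | none => exact hμ0.le
          | some i =>
            have : v (some i) k = μ + ρ * (Pi.single i 1 : Fin m → ℝ) k := by simp [v]
            rw [this]
            have : (0:ℝ) ≤ (Pi.single i 1 : Fin m → ℝ) k := by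
              rcases eq_or_ne k i with rfl | hk
              · simp
              · simp [Pi.single_eq_of_ne hk]
            positivity
        have : (β⁻¹ • v o) k = β⁻¹ * v o k := rfl
        rw [this]
        positivity
      · have hX : ∑ k, (β⁻¹ • v o) k ^ 2 = (β⁻¹)^2 * ∑ k, v o k ^ 2 := by
          simp_rw [Pi.smul_apply, smul_eq_mul, mul_pow]
          rw [← Finset.mul_sum]
        rw [hX, Real.sqrt_mul (sq_nonneg _), Real.sqrt_sq (by positivity)]
        calc β⁻¹ * Real.sqrt (∑ k, v o k ^ 2) ≤ β⁻¹ * β := by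
              exact mul_le_mul_of_nonneg_left (norm_v o) (by positivity)
          _ = 1 := inv_mul_cancel₀ hβ0.ne'
    · intro x hx y hy a b ha hb hab
      show β⁻¹ • (a • x + b • y) ∈ U
      have : β⁻¹ • (a • x + b • y) = a • (β⁻¹ • x) + b • (β⁻¹ • y) := by
        rw [smul_add, smul_comm β⁻¹ a, smul_comm β⁻¹ b]
      rw [this]
      exact convexU hx hy ha hb hab
  exact hsub hmem
end

section
/- Let m ≥ 1 and U = {ξ ∈ ℝ^m_+ : ‖ξ‖₂ ≤ 1}. Consider the two-stage instance: minimize over α ≥ 0 and second-stage recourse the worst case of √m·α + e·x(ξ) subject to α·e + x(ξ) ≥ ξ and x(ξ) ≥ 0 for all ξ ∈ U. Then for every affine policy, i.e., every α ≥ 0, P ∈ ℝ^{m×m} and q ∈ ℝ^m such that for all ξ ∈ U both P ξ + q ≥ 0 and α·e + P ξ + q ≥ ξ hold componentwise, one has sup_{ξ∈U} ( √m·α + e·(P ξ + q) ) ≥ √m − m/(m + √m) ≥ √m − 1. -/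
open Matrix

/-- **Lower bound for affine policies on the hypersphere instance.** For any feasible
affine policy `(α, P, q)` of the two-stage instance
`min √m·α + e·x(ξ)` s.t. `α·e + x(ξ) ≥ ξ`, `x(ξ) ≥ 0` on `U = {ξ ≥ 0 : ‖ξ‖₂ ≤ 1}`,
the worst-case cost is at least `√m − m/(m + √m) ≥ √m − 1`. -/
theorem stmt5 {m : ℕ} (hm : 1 ≤ m)
    (α : ℝ) (hα : 0 ≤ α)
    (P : Matrix (Fin m) (Fin m) ℝ) (q : Fin m → ℝ)
    (hpos : ∀ ξ : Fin m → ℝ, ((∀ i, 0 ≤ ξ i) ∧ Real.sqrt (∑ i, ξ i ^ 2) ≤ 1) →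
      ∀ i, 0 ≤ P.mulVec ξ i + q i)
    (hcover : ∀ ξ : Fin m → ℝ, ((∀ i, 0 ≤ ξ i) ∧ Real.sqrt (∑ i, ξ i ^ 2) ≤ 1) →
      ∀ i, ξ i ≤ α + (P.mulVec ξ i + q i)) :
    Real.sqrt m - 1 ≤ Real.sqrt m - m / (m + Real.sqrt m) ∧
    Real.sqrt m - m / (m + Real.sqrt m) ≤
      sSup ((fun ξ : Fin m → ℝ => Real.sqrt m * α + ∑ i, (P.mulVec ξ i + q i)) ''
        {ξ | (∀ i, 0 ≤ ξ i) ∧ Real.sqrt (∑ i, ξ i ^ 2) ≤ 1}) := by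
  set s := Real.sqrt m with hs
  have hm1 : (1:ℝ) ≤ (m:ℝ) := by exact_mod_cast hm
  have hs1 : 1 ≤ s := by
    rw [hs, show (1:ℝ) = Real.sqrt 1 by simp]
    exact Real.sqrt_le_sqrt hm1
  have hs0 : 0 < s := lt_of_lt_of_le one_pos hs1
  have hssq : s ^ 2 = (m:ℝ) := Real.sq_sqrt (by linarith)
  -- q ≥ 0
  have h0U : (∀ i, (0:ℝ) ≤ (0 : Fin m → ℝ) i) ∧ Real.sqrt (∑ i, (0 : Fin m → ℝ) i ^ 2) ≤ 1 := by
    constructor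
    · intro i; simp
    · simp
  have hq : ∀ i, 0 ≤ q i := by
    intro i
    have := hpos 0 h0U i
    simpa [Matrix.mulVec_zero] using this
  set t := ∑ i, q i with ht
  have ht0 : 0 ≤ t := Finset.sum_nonneg fun i _ => hq i
  -- diagonal bound
  have hdiag : ∀ j, 1 ≤ α + (P j j + q j) := by
    intro j
    have hUj : (∀ i, (0:ℝ) ≤ (Pi.single j 1 : Fin m → ℝ) i) ∧
        Real.sqrt (∑ i, (Pi.single j 1 : Fin m → ℝ) i ^ 2) ≤ 1 := by
      constructor
      · intro i; by_cases h : i = j <;> simp [Pi.single_apply, h]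
      · have : (∑ i, (Pi.single j 1 : Fin m → ℝ) i ^ 2) = 1 := by
          simp [Pi.single_apply]
        simp [this]
    have := hcover _ hUj j
    have hmv : P.mulVec (Pi.single j 1) j = P j j := by
      simp [Matrix.mulVec, dotProduct, Pi.single_apply, mul_comm]
    simpa [hmv] using this
  -- negative parts
  set n : Fin m → Fin m → ℝ := fun i j => max (-P i j) 0 with hn
  have hn0 : ∀ i j, 0 ≤ n i j := fun i j => le_max_right _ _
  have hnP : ∀ i j, -(n i j) ≤ P i j := by
    intro i j
    have h := le_max_left (-P i j) 0
    have : -P i j ≤ n i j := h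
    linarith
  -- row ℓ2-norm of negative part bounded by q i
  have hrow : ∀ i, Real.sqrt (∑ j, n i j ^ 2) ≤ q i := by
    intro i
    set N := Real.sqrt (∑ j, n i j ^ 2) with hN
    have hsum0 : 0 ≤ ∑ j, n i j ^ 2 := Finset.sum_nonneg fun j _ => sq_nonneg _
    rcases eq_or_lt_of_le hsum0 with h0 | hpos'
    · rw [hN, ← h0]; simpa using hq i
    · have hN0 : 0 < N := Real.sqrt_pos.mpr hpos'
      have hNsq : N ^ 2 = ∑ j, n i j ^ 2 := Real.sq_sqrt hsum0
      set ξ : Fin m → ℝ := fun j => n i j / N with hξ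
      have hξU : (∀ k, 0 ≤ ξ k) ∧ Real.sqrt (∑ k, ξ k ^ 2) ≤ 1 := by
        constructor
        · intro k; exact div_nonneg (hn0 i k) hN0.le
        · have : (∑ k, ξ k ^ 2) = 1 := by
            simp only [hξ, div_pow]
            rw [← Finset.sum_div, ← hNsq]
            field_simp
          simp [this]
      have hP := hpos ξ hξU i
      have hmv : P.mulVec ξ i = -N := by
        have hterm : ∀ j, P i j * ξ j = -(n i j ^ 2) / N := by
          intro j
          have hξj : ξ j = n i j / N := rfl
          rcases le_or_gt (P i j) 0 with h | h
          · have hnv : n i j = -P i j := max_eq_left (neg_nonneg.mpr h)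
            rw [hξj, hnv]; ring
          · have hnv : n i j = 0 := max_eq_right (by linarith)
            rw [hξj, hnv]; simp
        simp only [Matrix.mulVec, dotProduct]
        rw [Finset.sum_congr rfl fun j _ => hterm j, ← Finset.sum_div,
          Finset.sum_neg_distrib, ← hNsq, pow_two, neg_div, mul_div_assoc,
          div_self hN0.ne', mul_one]
      rw [hmv] at hP
      linarith
  -- ℓ1 bound on negative parts
  have hl1 : ∀ i, (∑ j, n i j) ≤ s * q i := by
    intro i
    have hcs : (∑ j, n i j) ^ 2 ≤ (m:ℝ) * ∑ j, n i j ^ 2 := by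
      have := sq_sum_le_card_mul_sum_sq (s := (Finset.univ : Finset (Fin m))) (f := n i)
      simpa using this
    have hnn : 0 ≤ ∑ j, n i j := Finset.sum_nonneg fun j _ => hn0 i j
    have h1 : (∑ j, n i j) = Real.sqrt ((∑ j, n i j) ^ 2) := (Real.sqrt_sq hnn).symm
    rw [h1]
    have h2 : Real.sqrt ((∑ j, n i j) ^ 2) ≤ Real.sqrt ((m:ℝ) * ∑ j, n i j ^ 2) :=
      Real.sqrt_le_sqrt hcs
    have h3 : Real.sqrt ((m:ℝ) * ∑ j, n i j ^ 2) = s * Real.sqrt (∑ j, n i j ^ 2) := by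
      rw [Real.sqrt_mul (by positivity)]
    calc Real.sqrt ((∑ j, n i j) ^ 2) ≤ s * Real.sqrt (∑ j, n i j ^ 2) := by rw [← h3]; exact h2
      _ ≤ s * q i := by
          apply mul_le_mul_of_nonneg_left (hrow i) hs0.le
  -- total sum of entries of P
  have hPsum : (m:ℝ) - (m:ℝ) * α - t - s * t ≤ ∑ i, ∑ j, P i j := by
    have hentry : ∀ i j, (if i = j then 1 - α - q j else 0) - n i j ≤ P i j := by
      intro i j
      by_cases h : i = j
      · subst h
        simp only [if_pos rfl, eq_self_iff_true, if_true]
        linarith [hnP i i, hdiag i, hn0 i i]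
      · simp only [if_neg h]
        linarith [hnP i j]
    have h1 : (∑ i, ∑ j, ((if i = j then 1 - α - q j else 0) - n i j)) ≤ ∑ i, ∑ j, P i j := by
      apply Finset.sum_le_sum; intro i _
      apply Finset.sum_le_sum; intro j _
      exact hentry i j
    have e1 : ∀ i : Fin m, (∑ j, ((if i = j then (1:ℝ) - α - q j else 0) - n i j))
        = ((1:ℝ) - α - q i) - ∑ j, n i j := by
      intro i
      rw [Finset.sum_sub_distrib]
      congr 1
      simp
    have h2 : (∑ i, ∑ j, ((if i = j then (1:ℝ) - α - q j else 0) - n i j))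
        = ((m:ℝ) - (m:ℝ)*α - t) - ∑ i, ∑ j, n i j := by
      rw [Finset.sum_congr rfl fun i _ => e1 i, Finset.sum_sub_distrib]
      congr 1
      rw [Finset.sum_sub_distrib, Finset.sum_sub_distrib, ← ht]
      simp [Finset.sum_const, Finset.card_univ, mul_comm]
    have h3 : (∑ i, ∑ j, n i j) ≤ s * t := by
      calc (∑ i, ∑ j, n i j) ≤ ∑ i, s * q i := Finset.sum_le_sum fun i _ => hl1 i
        _ = s * t := by rw [← Finset.mul_sum]
    rw [h2] at h1
    linarith
  -- the set and its boundedness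
  set U : Set (Fin m → ℝ) := {ξ | (∀ i, 0 ≤ ξ i) ∧ Real.sqrt (∑ i, ξ i ^ 2) ≤ 1} with hU
  set c : (Fin m → ℝ) → ℝ := fun ξ => s * α + ∑ i, (P.mulVec ξ i + q i) with hc
  have hcoord : ∀ ξ ∈ U, ∀ j, ξ j ≤ 1 := by
    intro ξ hξ j
    obtain ⟨hξ0, hξn⟩ := hξ
    have hsum0 : 0 ≤ ∑ i, ξ i ^ 2 := Finset.sum_nonneg fun i _ => sq_nonneg _
    have hsum1 : ∑ i, ξ i ^ 2 ≤ 1 := by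
      nlinarith [Real.sq_sqrt hsum0, Real.sqrt_nonneg (∑ i, ξ i ^ 2)]
    have : ξ j ^ 2 ≤ 1 := le_trans (Finset.single_le_sum (f := fun i => ξ i ^ 2)
      (fun i _ => sq_nonneg _) (Finset.mem_univ j)) hsum1
    nlinarith [hξ0 j]
  have hbdd : BddAbove (c '' U) := by
    refine ⟨s * α + (∑ i, ∑ j, |P i j|) + t, ?_⟩
    rintro y ⟨ξ, hξ, rfl⟩
    have hb : ∀ i, P.mulVec ξ i ≤ ∑ j, |P i j| := by
      intro i
      simp only [Matrix.mulVec, dotProduct]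
      apply Finset.sum_le_sum
      intro j _
      calc P i j * ξ j ≤ |P i j * ξ j| := le_abs_self _
        _ = |P i j| * |ξ j| := abs_mul _ _
        _ ≤ |P i j| * 1 := by
            apply mul_le_mul_of_nonneg_left _ (abs_nonneg _)
            rw [abs_of_nonneg (hξ.1 j)]; exact hcoord ξ hξ j
        _ = |P i j| := mul_one _
    simp only [hc]
    have : (∑ i, (P.mulVec ξ i + q i)) ≤ (∑ i, ∑ j, |P i j|) + t := by
      rw [Finset.sum_add_distrib, ← ht]
      have : (∑ i, P.mulVec ξ i) ≤ ∑ i, ∑ j, |P i j| := Finset.sum_le_sum fun i _ => hb i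
      linarith
    linarith
  set S := sSup (c '' U) with hSdef
  -- witness 0
  have hw0 : t ≤ S := by
    have h0mem : (0 : Fin m → ℝ) ∈ U := h0U
    have hmem : c 0 ∈ c '' U := ⟨0, h0mem, rfl⟩
    have hle := le_csSup hbdd hmem
    rw [← hSdef] at hle
    have hc0 : c 0 = s * α + t := by
      simp [hc, Matrix.mulVec_zero, ht]
    rw [hc0] at hle
    nlinarith [mul_nonneg hs0.le hα]
  -- witness e/√m
  have hw1 : s - t / s ≤ S := by
    set ξ : Fin m → ℝ := fun _ => 1 / s with hξ
    have hξU : ξ ∈ U := by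
      constructor
      · intro i; positivity
      · have : (∑ i, ξ i ^ 2) = 1 := by
          simp only [hξ]
          rw [Finset.sum_const]
          simp only [Finset.card_univ, Fintype.card_fin, nsmul_eq_mul]
          rw [div_pow, one_pow, ← hssq]
          field_simp
        simp [this]
    have hmem : c ξ ∈ c '' U := ⟨ξ, hξU, rfl⟩
    have hle := le_csSup hbdd hmem
    rw [← hSdef] at hle
    have hsum : (∑ i, P.mulVec ξ i) = (1/s) * ∑ i, ∑ j, P i j := by
      rw [Finset.mul_sum]
      refine Finset.sum_congr rfl fun i _ => ?_
      simp only [Matrix.mulVec, dotProduct, hξ]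
      rw [Finset.mul_sum]
      refine Finset.sum_congr rfl fun j _ => ?_
      ring
    have hcξ : c ξ = s * α + (1/s) * (∑ i, ∑ j, P i j) + t := by
      simp only [hc, Finset.sum_add_distrib, ← ht, hsum]
      ring
    rw [hcξ] at hle
    have h1 : (1/s) * ((m:ℝ) - (m:ℝ)*α - t - s*t) ≤ (1/s) * (∑ i, ∑ j, P i j) :=
      mul_le_mul_of_nonneg_left hPsum (by positivity)
    have h2 : (1/s) * ((m:ℝ) - (m:ℝ)*α - t - s*t) = s - s*α - t/s - t := by
      rw [← hssq]
      field_simp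
    linarith
  -- combine
  have hkey : s ^ 2 ≤ S * (s + 1) := by
    have h1 : s * (s - t/s) ≤ s * S := mul_le_mul_of_nonneg_left hw1 hs0.le
    have h2 : s * (s - t/s) = s^2 - t := by field_simp
    rw [h2] at h1
    linarith
  have hden : 0 < (m:ℝ) + s := by linarith
  have htarget : s - (m:ℝ) / ((m:ℝ) + s) = s^2 / (s + 1) := by
    rw [← hssq]
    field_simp
    ring
  constructor
  · have : (m:ℝ) / ((m:ℝ) + s) ≤ 1 := by
      rw [div_le_one hden]; linarith
    linarith
  · rw [htarget, div_le_iff₀ (by linarith : (0:ℝ) < s + 1)]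
    exact hkey
end

section
/- Let m ≥ 1, α = m^{-1/4}, and U = {ξ ∈ ℝ^m_+ : ‖ξ‖₂ ≤ 1}. Then the policy x(ξ) = (ξ − α·e)_+ together with first-stage decision α is feasible (α·e + x(ξ) ≥ ξ and x(ξ) ≥ 0 for all ξ ∈ U), and for every ξ ∈ U, √m·α + Σ_{i=1}^m (ξ_i − α)_+ ≤ (5/4)·m^{1/4}. -/
/-- **Upper bound for the piecewise policy on the hypersphere instance.** With
`α = m^{-1/4}` and `x(ξ) = (ξ − α·e)₊`, the policy is feasible and its cost is
at most `(5/4)·m^{1/4}` for every `ξ ∈ U = {ξ ≥ 0 : ‖ξ‖₂ ≤ 1}`. -/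
theorem stmt6 {m : ℕ} (hm : 1 ≤ m) :
    let α : ℝ := (m : ℝ) ^ (-(1 : ℝ) / 4)
    let x : (Fin m → ℝ) → Fin m → ℝ := fun ξ i => max (ξ i - α) 0
    ∀ ξ : Fin m → ℝ, ((∀ i, 0 ≤ ξ i) ∧ Real.sqrt (∑ i, ξ i ^ 2) ≤ 1) →
      (∀ i, 0 ≤ x ξ i) ∧
      (∀ i, ξ i ≤ α + x ξ i) ∧
      Real.sqrt m * α + (∑ i, max (ξ i - α) 0) ≤ 5 / 4 * (m : ℝ) ^ ((1 : ℝ) / 4) := by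
  intro α x ξ hξ
  obtain ⟨hξ0, hξnorm⟩ := hξ
  have hm1 : (1 : ℝ) ≤ (m : ℝ) := by exact_mod_cast hm
  have hmpos : (0 : ℝ) < (m : ℝ) := by linarith
  have hα : 0 < α := Real.rpow_pos_of_pos hmpos _
  have hsum0 : 0 ≤ ∑ i, ξ i ^ 2 := Finset.sum_nonneg fun i _ => sq_nonneg _
  have hsum1 : ∑ i, ξ i ^ 2 ≤ 1 := by
    nlinarith [Real.sq_sqrt hsum0, Real.sqrt_nonneg (∑ i, ξ i ^ 2)]
  refine ⟨fun i => le_max_right _ _, fun i => ?_, ?_⟩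
  · have := le_max_left (ξ i - α) 0
    simp only [x]
    linarith
  · -- pointwise bound
    have hpt : ∀ i, max (ξ i - α) 0 ≤ ξ i ^ 2 / (4 * α) := by
      intro i
      apply max_le
      · rw [le_div_iff₀ (by positivity : (0:ℝ) < 4 * α)]
        nlinarith [sq_nonneg (ξ i - 2 * α)]
      · positivity
    have hsumle : (∑ i, max (ξ i - α) 0) ≤ (∑ i, ξ i ^ 2) / (4 * α) := by
      rw [Finset.sum_div]
      exact Finset.sum_le_sum fun i _ => hpt i
    have h1 : (∑ i, max (ξ i - α) 0) ≤ 1 / (4 * α) := by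
      exact hsumle.trans (div_le_div_of_nonneg_right hsum1 (by positivity))
    have hprod : α * (m : ℝ) ^ ((1 : ℝ) / 4) = 1 := by
      rw [← Real.rpow_add hmpos]; norm_num
    have hsqrtα : Real.sqrt m * α = (m : ℝ) ^ ((1 : ℝ) / 4) := by
      rw [Real.sqrt_eq_rpow, ← Real.rpow_add hmpos]; norm_num
    have hinv : 1 / (4 * α) = (m : ℝ) ^ ((1 : ℝ) / 4) / 4 := by
      field_simp
      linarith [hprod]
    rw [hsqrtα]
    rw [hinv] at h1
    linarith
end

section
/- Let m ≥ 2, k ∈ {1,…,m}, and U = {ξ ∈ [0,1]^m : Σ_{i=1}^m ξ_i ≤ k} be the budgeted uncertainty set. Set μ = k(k−1)/(m + k(k−2)), ρ = k(m−k)/(m + k(k−2)), v_0 = μ·e, v_i = v_0 + ρ·e_i, and β = k(m−1)/(m + k(k−2)). Then: (i) for every ξ ∈ U, Σ_{i=1}^m (ξ_i − μ)_+ ≤ ρ, so Û = conv(v_0,…,v_m) dominates U via h(ξ) = (ξ − v_0)_+ + v_0; and (ii) (1/β)·v_i ∈ U for every i ∈ {0,…,m}, i.e., (μ + ρ)/β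 ≤ 1 and (m·μ + ρ)/β ≤ k. -/
/-- **Proposition (budgeted uncertainty).** For
`U = {ξ ∈ [0,1]^m : Σᵢ ξᵢ ≤ k}`, with `μ = k(k−1)/(m+k(k−2))`,
`ρ = k(m−k)/(m+k(k−2))`, `v₀ = μ·e`, `vᵢ = v₀ + ρ eᵢ` and
`β = k(m−1)/(m+k(k−2))`: (i) `Σᵢ (ξᵢ − μ)₊ ≤ ρ` for all `ξ ∈ U`, so
`Û = conv(v₀,…,v_m)` dominates `U` via `h(ξ) = (ξ − v₀)₊ + v₀`;
(ii) `(1/β)·vᵢ ∈ U` for all `i`, i.e. `(μ+ρ)/β ≤ 1` and `(mμ+ρ)/β ≤ k`. -/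
theorem stmt7 {m k : ℕ} (hm : 2 ≤ m) (hk1 : 1 ≤ k) (hkm : k ≤ m) :
    let U : Set (Fin m → ℝ) :=
      {ξ | (∀ i, 0 ≤ ξ i ∧ ξ i ≤ 1) ∧ (∑ i, ξ i) ≤ (k : ℝ)}
    let μ : ℝ := (k : ℝ) * ((k : ℝ) - 1) / ((m : ℝ) + (k : ℝ) * ((k : ℝ) - 2))
    let ρ : ℝ := (k : ℝ) * ((m : ℝ) - (k : ℝ)) / ((m : ℝ) + (k : ℝ) * ((k : ℝ) - 2))
    let β : ℝ := (k : ℝ) * ((m : ℝ) - 1) / ((m : ℝ) + (k : ℝ) * ((k : ℝ) - 2))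
    let v : Option (Fin m) → Fin m → ℝ :=
      fun o => o.elim (fun _ => μ) (fun i => (fun _ => μ) + ρ • (Pi.single i (1 : ℝ) : Fin m → ℝ))
    let h : (Fin m → ℝ) → Fin m → ℝ := fun ξ i => max (ξ i - μ) 0 + μ
    -- (i)
    (∀ ξ ∈ U, (∑ i, max (ξ i - μ) 0) ≤ ρ) ∧
    (∀ ξ ∈ U, (∀ i, ξ i ≤ h ξ i) ∧ h ξ ∈ convexHull ℝ (Set.range v)) ∧
    -- (ii)
    (∀ i, β⁻¹ • v i ∈ U) ∧ (μ + ρ) / β ≤ 1 ∧ ((m : ℝ) * μ + ρ) / β ≤ (k : ℝ) := by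
  intro U μ ρ β v h
  have hμdef : μ = (k : ℝ) * ((k : ℝ) - 1) / ((m : ℝ) + (k : ℝ) * ((k : ℝ) - 2)) := rfl
  have hρdef : ρ = (k : ℝ) * ((m : ℝ) - (k : ℝ)) / ((m : ℝ) + (k : ℝ) * ((k : ℝ) - 2)) := rfl
  have hβdef : β = (k : ℝ) * ((m : ℝ) - 1) / ((m : ℝ) + (k : ℝ) * ((k : ℝ) - 2)) := rfl
  have hM : (2:ℝ) ≤ (m:ℝ) := by exact_mod_cast hm
  have hK : (1:ℝ) ≤ (k:ℝ) := by exact_mod_cast hk1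
  have hKM : (k:ℝ) ≤ (m:ℝ) := by exact_mod_cast hkm
  have hD : (0:ℝ) < (m : ℝ) + (k : ℝ) * ((k : ℝ) - 2) := by nlinarith
  have hμ0 : 0 ≤ μ := by rw [hμdef]; apply div_nonneg _ hD.le; nlinarith
  have hρ0 : 0 ≤ ρ := by rw [hρdef]; apply div_nonneg _ hD.le; nlinarith
  have hμ1 : μ ≤ 1 := by rw [hμdef, div_le_one hD]; nlinarith
  have hβpos : 0 < β := by rw [hβdef]; apply div_pos _ hD; nlinarith
  have hμρβ : μ + ρ = β := by rw [hμdef, hρdef, hβdef]; field_simp; ring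
  have hmμρ : (m:ℝ) * μ + ρ = (k:ℝ) * β := by
    rw [hμdef, hρdef, hβdef]; field_simp; ring
  have key : ∀ ξ ∈ U, (∑ i, max (ξ i - μ) 0) ≤ ρ := by
    intro ξ hξ
    obtain ⟨hb, hs⟩ := hξ
    have h1 : (∑ i, max (ξ i - μ) 0) ≤ ∑ i, (1 - μ) * ξ i := by
      apply Finset.sum_le_sum
      intro i _
      have := (hb i).1; have := (hb i).2
      apply max_le (by nlinarith) (by nlinarith)
    have h2 : ∑ i, (1 - μ) * ξ i = (1 - μ) * ∑ i, ξ i := by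
      rw [Finset.mul_sum]
    have h3 : (1 - μ) * ∑ i, ξ i ≤ (1 - μ) * (k:ℝ) := by
      apply mul_le_mul_of_nonneg_left hs (by linarith)
    have h4 : (1 - μ) * (k:ℝ) = ρ := by
      rw [hμdef, hρdef]; field_simp; ring
    calc (∑ i, max (ξ i - μ) 0) ≤ ∑ i, (1 - μ) * ξ i := h1
      _ = (1 - μ) * ∑ i, ξ i := h2
      _ ≤ (1 - μ) * (k:ℝ) := h3
      _ = ρ := h4
  refine ⟨key, ?_, ?_, ?_, ?_⟩
  · intro ξ hξ
    constructor
    · intro i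
      show ξ i ≤ max (ξ i - μ) 0 + μ
      have := le_max_left (ξ i - μ) 0
      linarith
    · -- convex hull membership
      set w : Fin m → ℝ := fun i => max (ξ i - μ) 0 with hw
      have hw0 : ∀ i, 0 ≤ w i := fun i => le_max_right _ _
      have hws : (∑ i, w i) ≤ ρ := key ξ hξ
      rcases eq_or_lt_of_le hρ0 with hρz | hρpos
      · -- ρ = 0 : all w i = 0, h ξ = v none
        have hwz : ∀ i, w i = 0 := by
          intro i
          have : ∑ j, w j ≤ 0 := by rw [← hρz] at hws; exact hws
          have hnn : 0 ≤ ∑ j, w j := Finset.sum_nonneg fun j _ => hw0 j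
          have hz : ∑ j, w j = 0 := le_antisymm this hnn
          have := (Finset.sum_eq_zero_iff_of_nonneg (fun j _ => hw0 j)).mp hz
          exact this i (Finset.mem_univ i)
        have : h ξ = v none := by
          funext i
          show max (ξ i - μ) 0 + μ = μ
          rw [show max (ξ i - μ) 0 = w i from rfl, hwz i, zero_add]
        rw [this]
        exact subset_convexHull ℝ _ ⟨none, rfl⟩
      · -- ρ > 0
        set c : Option (Fin m) → ℝ := fun o => o.elim (1 - (∑ i, w i) / ρ) (fun i => w i / ρ) with hc
        have hc0 : ∀ o, 0 ≤ c o := by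
          intro o
          match o with
          | none =>
            show 0 ≤ 1 - (∑ i, w i) / ρ
            have : (∑ i, w i) / ρ ≤ 1 := by
              rw [div_le_one hρpos]; exact hws
            linarith
          | some i => exact div_nonneg (hw0 i) hρpos.le
        have hcs : ∑ o : Option (Fin m), c o = 1 := by
          rw [Fintype.sum_option]
          show (1 - (∑ i, w i) / ρ) + ∑ i, w i / ρ = 1
          rw [← Finset.sum_div]
          ring
        have hrep : h ξ = ∑ o : Option (Fin m), c o • v o := by
          funext j
          have : (∑ o : Option (Fin m), c o • v o) j = ∑ o : Option (Fin m), c o * v o j := by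
            simp [Finset.sum_apply]
          rw [this, Fintype.sum_option]
          simp only [hc, v, h, Option.elim, Pi.add_apply, Pi.smul_apply, smul_eq_mul]
          have hsplit : ∀ i : Fin m, (w i / ρ) * (μ + ρ * (Pi.single i (1:ℝ) : Fin m → ℝ) j)
              = (w i / ρ) * μ + w i * (Pi.single i (1:ℝ) : Fin m → ℝ) j := by
            intro i; field_simp
          rw [Finset.sum_congr rfl (fun i _ => hsplit i)]
          rw [Finset.sum_add_distrib]
          have h1 : ∑ i, (w i / ρ) * μ = ((∑ i, w i) / ρ) * μ := by
            rw [← Finset.sum_mul, ← Finset.sum_div]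
          have h2 : ∑ i : Fin m, w i * (Pi.single i (1:ℝ) : Fin m → ℝ) j = w j := by
            rw [Finset.sum_eq_single j]
            · simp
            · intro b _ hbj; simp [Pi.single_apply, hbj]
            · intro habs; exact absurd (Finset.mem_univ j) habs
          rw [h1, h2]
          show max (ξ j - μ) 0 + μ = (1 - (∑ i, w i) / ρ) * μ + (((∑ i, w i) / ρ) * μ + w j)
          have : max (ξ j - μ) 0 = w j := rfl
          rw [this]; ring
        rw [hrep]
        exact (convex_convexHull ℝ _).sum_mem (fun o _ => hc0 o) hcs
          (fun o _ => subset_convexHull ℝ _ ⟨o, rfl⟩)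
  · -- β⁻¹ • v i ∈ U
    have hμβ : μ ≤ β := by linarith
    have hcomp0 : 0 ≤ β⁻¹ * μ := mul_nonneg (inv_nonneg.mpr hβpos.le) hμ0
    have hcomp1 : β⁻¹ * μ ≤ 1 := by
      rw [← div_eq_inv_mul, div_le_one hβpos]; exact hμβ
    intro o
    match o with
    | none =>
      constructor
      · intro i
        exact ⟨hcomp0, hcomp1⟩
      · have : (∑ i : Fin m, (β⁻¹ • v none) i) = (m:ℝ) * (β⁻¹ * μ) := by
          simp [v, Finset.sum_const, mul_comm]
        rw [this]
        rw [← div_eq_inv_mul, ← mul_div_assoc, div_le_iff₀ hβpos]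
        nlinarith
    | some i =>
      have hval : ∀ j, (β⁻¹ • v (some i)) j
          = β⁻¹ * (μ + ρ * (Pi.single i (1:ℝ) : Fin m → ℝ) j) := by
        intro j; simp [v]; try ring
      constructor
      · intro j
        rw [hval j]
        rcases eq_or_ne j i with rfl | hji
        · simp only [Pi.single_eq_same, mul_one]
          constructor
          · exact mul_nonneg (inv_nonneg.mpr hβpos.le) (by linarith)
          · rw [hμρβ, inv_mul_cancel₀ hβpos.ne']
        · rw [Pi.single_eq_of_ne hji, mul_zero, add_zero]
          exact ⟨hcomp0, hcomp1⟩
      · have : (∑ j : Fin m, (β⁻¹ • v (some i)) j)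
            = β⁻¹ * ((m:ℝ) * μ + ρ) := by
          rw [Finset.sum_congr rfl (fun j _ => hval j)]
          rw [← Finset.mul_sum]
          congr 1
          rw [Finset.sum_add_distrib, Finset.sum_const, ← Finset.mul_sum,
            Finset.sum_pi_single']
          simp [mul_comm]
        rw [this, hmμρ, mul_comm (k:ℝ) β, ← mul_assoc, inv_mul_cancel₀ hβpos.ne', one_mul]
  · rw [hμρβ, div_self hβpos.ne']
  · rw [hmμρ, mul_div_assoc, div_self hβpos.ne', mul_one]
end

section
/- Let m ≥ 2, k an integer with 1 ≤ k ≤ m, and U = {ξ ∈ [0,1]^m : Σ_i ξ_i ≤ k}. Let v_0 ∈ [0,1]^m and ρ_1,…,ρ_m > 0 define v_i = v_0 + ρ_i e_i such that for all ξ ∈ U, Σ_{i=1}^m ((ξ − v_0)_+)_i/ρ_i ≤ 1 (so Û = conv(v_0,…,v_m) dominates U). Let (z, x_0,…,x_m) be any feasible solution of the LP: z ≥ c·x_i and A x_i ≥ D v_i + d for all i ∈ {0,…,m}, and x_i, x_j agree on every decision coordinate with stage ≤ t whenever v_i, v_j agree on every uncertainty coordinate with stage ≤ t. Then there exists a nonanticipative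 affine policy, i.e., P ∈ ℝ^{n×m} with P_{j,i} = 0 whenever τ(i) > σ(j) and q ∈ ℝ^n, such that A(Pξ + q) ≥ Dξ + d for all ξ ∈ U and sup_{ξ∈U} c·(Pξ + q) ≤ z. Consequently Z_AFF ≤ Z_PAP, where Z_AFF is the infimum of the worst-case cost over feasible nonanticipative affine policies and Z_PAP is the optimal LP value. -/
open Matrix

lemma topk_aux {m : ℕ} (w : Fin m → ℝ) :
    ∀ (k : ℕ) (s : Finset (Fin m)), k ≤ s.card →
      ∃ t ⊆ s, t.card = k ∧ ∀ i ∈ s, i ∉ t → ∀ j ∈ t, w i ≤ w j := by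
  intro k
  induction k with
  | zero => intro s _; exact ⟨∅, Finset.empty_subset s, rfl, by simp⟩
  | succ k ih =>
    intro s hcard
    have hne : s.Nonempty := Finset.card_pos.mp (by omega)
    obtain ⟨j₀, hj₀s, hj₀max⟩ := s.exists_max_image w hne
    obtain ⟨t, hts, htc, htp⟩ := ih (s.erase j₀) (by
      rw [Finset.card_erase_of_mem hj₀s]; omega)
    have hj₀t : j₀ ∉ t := fun h => (Finset.mem_erase.mp (hts h)).1 rfl
    refine ⟨insert j₀ t, ?_, ?_, ?_⟩
    · intro a ha
      rcases Finset.mem_insert.mp ha with h | h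
      · exact h ▸ hj₀s
      · exact (Finset.mem_erase.mp (hts h)).2
    · rw [Finset.card_insert_of_notMem hj₀t, htc]
    · intro i his hit j hj
      rcases Finset.mem_insert.mp hj with h | h
      · exact h ▸ hj₀max i his
      · have hmem : i ∈ s.erase j₀ :=
          Finset.mem_erase.mpr ⟨fun h' => hit (h' ▸ Finset.mem_insert_self j₀ t), his⟩
        exact htp i hmem (fun h' => hit (Finset.mem_insert_of_mem h')) j h

lemma budget_sum {m : ℕ} (k : ℕ) (hk1 : 1 ≤ k) (hkm : k ≤ m)
    (w : Fin m → ℝ) (hw : ∀ i, 0 ≤ w i)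
    (hS : ∀ S : Finset (Fin m), S.card = k → ∑ i ∈ S, w i ≤ 1)
    (ξ : Fin m → ℝ) (hξ : ∀ i, 0 ≤ ξ i ∧ ξ i ≤ 1) (hsum : ∑ i, ξ i ≤ (k : ℝ)) :
    ∑ i, ξ i * w i ≤ 1 := by
  obtain ⟨S, hSsub, hScard, hSmax⟩ := topk_aux w k Finset.univ (by simpa using hkm)
  have hSne : S.Nonempty := Finset.card_pos.mp (by omega)
  obtain ⟨j₀, hj₀S, hj₀min⟩ := S.exists_min_image w hSne
  set t := w j₀ with ht
  have ht0 : 0 ≤ t := hw j₀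
  have e1 : ∑ i, ξ i * w i = (∑ i, ξ i * (w i - t)) + t * ∑ i, ξ i := by
    rw [Finset.mul_sum, ← Finset.sum_add_distrib]
    exact Finset.sum_congr rfl (fun i _ => by ring)
  have e2 : ∑ i, ξ i * (w i - t)
      = ∑ i ∈ S, ξ i * (w i - t) + ∑ i ∈ Sᶜ, ξ i * (w i - t) :=
    (Finset.sum_add_sum_compl S _).symm
  have b1 : ∑ i ∈ S, ξ i * (w i - t) ≤ ∑ i ∈ S, (w i - t) :=
    Finset.sum_le_sum fun i hi => by
      have h1 : t ≤ w i := hj₀min i hi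
      nlinarith [(hξ i).1, (hξ i).2]
  have b2 : ∑ i ∈ Sᶜ, ξ i * (w i - t) ≤ 0 := by
    apply Finset.sum_nonpos
    intro i hi
    have hiS : i ∉ S := by simpa using hi
    have : w i ≤ t := hSmax i (Finset.mem_univ i) hiS j₀ hj₀S
    nlinarith [(hξ i).1]
  have e3 : ∑ i ∈ S, (w i - t) = ∑ i ∈ S, w i - (k : ℝ) * t := by
    rw [Finset.sum_sub_distrib, Finset.sum_const, hScard]
    simp [mul_comm]
  have b3 : t * ∑ i, ξ i ≤ t * (k : ℝ) := mul_le_mul_of_nonneg_left hsum ht0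
  have b4 : ∑ i ∈ S, w i ≤ 1 := hS S hScard
  rw [e1, e2]
  linarith

/-- Optimal value of the piecewise affine policy (vertex LP). -/
noncomputable def ZPAP {l n m T : ℕ} (A : Matrix (Fin l) (Fin n) ℝ) (c : Fin n → ℝ)
    (D : Matrix (Fin l) (Fin m) ℝ) (d : Fin l → ℝ)
    (σ : Fin n → Fin T) (τ : Fin m → Fin T)
    (v : Option (Fin m) → Fin m → ℝ) : EReal :=
  sInf {w : EReal | ∃ z x, LPFeas A c D d σ τ v z x ∧ w = (z : EReal)}

/-- Optimal value over feasible nonanticipative affine policies `ξ ↦ Pξ + q`. -/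
noncomputable def ZAFF {l n m T : ℕ} (A : Matrix (Fin l) (Fin n) ℝ) (c : Fin n → ℝ)
    (D : Matrix (Fin l) (Fin m) ℝ) (d : Fin l → ℝ)
    (σ : Fin n → Fin T) (τ : Fin m → Fin T) (U : Set (Fin m → ℝ)) : EReal :=
  sInf {w : EReal | ∃ (P : Matrix (Fin n) (Fin m) ℝ) (q : Fin n → ℝ),
    (∀ j i, σ j < τ i → P j i = 0) ∧
    (∀ ξ ∈ U, ∀ r, (D.mulVec ξ) r + d r ≤ (A.mulVec (P.mulVec ξ + q)) r) ∧
    w = ⨆ ξ : U, ((c ⬝ᵥ (P.mulVec ξ.1 + q) : ℝ) : EReal)}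

/-- **Proposition (affine policies dominate piecewise affine policies on integer-budget
uncertainty).** For budgeted uncertainty with integer budget, every feasible LP solution
of the piecewise affine policy yields a feasible nonanticipative affine policy whose
worst-case cost is at most the LP value; consequently `Z_AFF ≤ Z_PAP`. -/
theorem stmt9 {l n m T : ℕ} (hm : 2 ≤ m) (k : ℕ) (hk1 : 1 ≤ k) (hkm : k ≤ m)
    (A : Matrix (Fin l) (Fin n) ℝ) (c : Fin n → ℝ)
    (D : Matrix (Fin l) (Fin m) ℝ) (d : Fin l → ℝ)
    (hD : ∀ i j, 0 ≤ D i j) (hd : ∀ i, 0 ≤ d i)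
    (σ : Fin n → Fin T) (τ : Fin m → Fin T)
    (v0 : Fin m → ℝ) (hv0 : ∀ i, 0 ≤ v0 i ∧ v0 i ≤ 1)
    (ρ : Fin m → ℝ) (hρ : ∀ i, 0 < ρ i) :
    let U : Set (Fin m → ℝ) :=
      {ξ | (∀ i, 0 ≤ ξ i ∧ ξ i ≤ 1) ∧ (∑ i, ξ i) ≤ (k : ℝ)}
    let v : Option (Fin m) → Fin m → ℝ :=
      fun o => o.elim v0 (fun i => v0 + ρ i • (Pi.single i (1 : ℝ) : Fin m → ℝ))
    (∀ ξ ∈ U, (∑ i, max (ξ i - v0 i) 0 / ρ i) ≤ 1) →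
    ((∀ z x, LPFeas A c D d σ τ v z x →
        ∃ (P : Matrix (Fin n) (Fin m) ℝ) (q : Fin n → ℝ),
          (∀ j i, σ j < τ i → P j i = 0) ∧
          (∀ ξ ∈ U, ∀ r, (D.mulVec ξ) r + d r ≤ (A.mulVec (P.mulVec ξ + q)) r) ∧
          (∀ ξ ∈ U, c ⬝ᵥ (P.mulVec ξ + q) ≤ z)) ∧
      ZAFF A c D d σ τ U ≤ ZPAP A c D d σ τ v) := by
  intro U v hdom
  have hv_none : v none = v0 := rfl
  have hv_some : ∀ i, v (some i) = v0 + ρ i • (Pi.single i (1:ℝ) : Fin m → ℝ) := fun i => rfl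
  have hUmem : ∀ ξ : Fin m → ℝ, ξ ∈ U ↔ ((∀ i, 0 ≤ ξ i ∧ ξ i ≤ 1) ∧ (∑ i, ξ i) ≤ (k : ℝ)) :=
    fun ξ => Iff.rfl
  set w : Fin m → ℝ := fun i => (1 - v0 i) / ρ i with hw_def
  have hw0 : ∀ i, 0 ≤ w i := fun i =>
    div_nonneg (by linarith [(hv0 i).2]) (hρ i).le
  have hρw : ∀ i, ρ i * w i = 1 - v0 i := fun i => by
    rw [hw_def]
    rw [mul_comm, div_mul_cancel₀ _ (hρ i).ne']
  -- indicator vectors give the subset sums bound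
  have hS : ∀ S : Finset (Fin m), S.card = k → ∑ i ∈ S, w i ≤ 1 := by
    intro S hScard
    have hmem : (fun i => if i ∈ S then (1:ℝ) else 0) ∈ U := by
      rw [hUmem]
      constructor
      · intro i; by_cases h : i ∈ S <;> simp [h]
      · rw [Finset.sum_ite_mem, Finset.univ_inter, Finset.sum_const, hScard]
        simp
    have hd2 := hdom _ hmem
    have heq : ∀ i, max ((if i ∈ S then (1:ℝ) else 0) - v0 i) 0 / ρ i
        = if i ∈ S then w i else 0 := by
      intro i
      by_cases h : i ∈ S
      · simp only [h, if_true]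
        rw [max_eq_left (by linarith [(hv0 i).2])]
      · simp only [h, if_false]
        rw [zero_sub, max_eq_right (by linarith [(hv0 i).1]), zero_div]
    calc ∑ i ∈ S, w i = ∑ i, (if i ∈ S then w i else 0) := by
          rw [Finset.sum_ite_mem, Finset.univ_inter]
      _ = ∑ i, max ((if i ∈ S then (1:ℝ) else 0) - v0 i) 0 / ρ i :=
          Finset.sum_congr rfl (fun i _ => (heq i).symm)
      _ ≤ 1 := hd2
  have hkey : ∀ ξ ∈ U, ∑ i, ξ i * w i ≤ 1 := fun ξ hξ =>
    budget_sum k hk1 hkm w hw0 hS ξ ((hUmem ξ).mp hξ).1 ((hUmem ξ).mp hξ).2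
  have part1 : ∀ z x, LPFeas A c D d σ τ v z x →
      ∃ (P : Matrix (Fin n) (Fin m) ℝ) (q : Fin n → ℝ),
        (∀ j i, σ j < τ i → P j i = 0) ∧
        (∀ ξ ∈ U, ∀ r, (D.mulVec ξ) r + d r ≤ (A.mulVec (P.mulVec ξ + q)) r) ∧
        (∀ ξ ∈ U, c ⬝ᵥ (P.mulVec ξ + q) ≤ z) := by
    intro z x hx
    obtain ⟨hz, hfeas, hna⟩ := hx
    have hlin : ∀ (f : Fin n → ℝ) (ξ : Fin m → ℝ),
        f ⬝ᵥ ((Matrix.mulVec (fun j i => w i * (x (some i) j - x none j)) ξ) + x none)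
          = f ⬝ᵥ x none + ∑ i, ξ i * w i * (f ⬝ᵥ x (some i) - f ⬝ᵥ x none) := by
      intro f ξ
      simp only [dotProduct, mulVec, Pi.add_apply, mul_add, Finset.sum_add_distrib,
        Finset.mul_sum]
      rw [Finset.sum_comm, add_comm]
      congr 1
      refine Finset.sum_congr rfl fun i _ => ?_
      rw [mul_sub, Finset.mul_sum, Finset.mul_sum, ← Finset.sum_sub_distrib]
      exact Finset.sum_congr rfl fun j _ => by ring
    have hD1 : ∀ (ξ : Fin m → ℝ) (r : Fin l),
        D.mulVec ξ r = D.mulVec v0 r + ∑ i, (ξ i - v0 i) * D r i := by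
      intro ξ r
      simp only [mulVec, dotProduct, ← Finset.sum_add_distrib]
      exact Finset.sum_congr rfl fun i _ => by ring
    have hDv : ∀ (i : Fin m) (r : Fin l),
        D.mulVec (v (some i)) r = D.mulVec v0 r + ρ i * D r i := by
      intro i r
      rw [hv_some]
      simp only [mulVec, dotProduct, Pi.add_apply, Pi.smul_apply, smul_eq_mul, mul_add,
        Finset.sum_add_distrib]
      congr 1
      rw [Finset.sum_eq_single i]
      · simp only [Pi.single_eq_same, mul_one]; ring
      · intro b _ hb; simp [Pi.single_eq_of_ne hb]
      · simp
    refine ⟨fun j i => w i * (x (some i) j - x none j), x none, ?_, ?_, ?_⟩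
    · -- nonanticipativity
      intro j i hji
      have hxx : x (some i) j = x none j := by
        refine hna (some i) none (σ j) ?_ j le_rfl
        intro a ha
        have hne : a ≠ i := by rintro rfl; exact absurd ha (not_le.mpr hji)
        rw [hv_some, hv_none]
        simp [Pi.single_eq_of_ne hne]
      simp [hxx]
    · -- feasibility
      intro ξ hξ r
      obtain ⟨hξb, hξs⟩ := (hUmem ξ).mp hξ
      have hAr : ∀ y : Fin n → ℝ, A.mulVec y r = A r ⬝ᵥ y := fun y => rfl
      have hmain : A.mulVec ((Matrix.mulVec (fun j i => w i * (x (some i) j - x none j)) ξ)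
            + x none) r - (D.mulVec ξ r + d r)
          = (A r ⬝ᵥ x none - (D.mulVec v0 r + d r))
            + ∑ i, (ξ i * w i * (A r ⬝ᵥ x (some i) - (D.mulVec v0 r + ρ i * D r i + d r))
                    + v0 i * (1 - ξ i) * D r i
                    - ξ i * w i * (A r ⬝ᵥ x none - (D.mulVec v0 r + d r))) := by
        rw [hAr, hlin (A r) ξ, hD1 ξ r]
        have hsplit : ∀ (a b e : ℝ) (f g : Fin m → ℝ),
            (a + ∑ i, f i) - ((b + ∑ i, g i) + e) = (a - (b + e)) + ∑ i, (f i - g i) := by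
          intro a b e f g
          rw [Finset.sum_sub_distrib]; ring
        rw [hsplit]
        congr 1
        refine Finset.sum_congr rfl fun i _ => ?_
        linear_combination (ξ i * D r i) * hρw i
      have hS0 : 0 ≤ A r ⬝ᵥ x none - (D.mulVec v0 r + d r) := by
        have h := hfeas none r
        rw [hv_none] at h
        have h2 : (A.mulVec (x none)) r = A r ⬝ᵥ x none := rfl
        linarith
      have hSi : ∀ i, 0 ≤ A r ⬝ᵥ x (some i) - (D.mulVec v0 r + ρ i * D r i + d r) := by
        intro i
        have h := hfeas (some i) r
        rw [hDv i r] at h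
        have h2 : (A.mulVec (x (some i))) r = A r ⬝ᵥ x (some i) := rfl
        linarith
      have hterm : ∀ i ∈ Finset.univ (α := Fin m),
          -(ξ i * w i * (A r ⬝ᵥ x none - (D.mulVec v0 r + d r)))
          ≤ ξ i * w i * (A r ⬝ᵥ x (some i) - (D.mulVec v0 r + ρ i * D r i + d r))
              + v0 i * (1 - ξ i) * D r i
              - ξ i * w i * (A r ⬝ᵥ x none - (D.mulVec v0 r + d r)) := by
        intro i _
        have h1 : 0 ≤ ξ i * w i := mul_nonneg (hξb i).1 (hw0 i)
        have h2 : 0 ≤ ξ i * w i * (A r ⬝ᵥ x (some i) - (D.mulVec v0 r + ρ i * D r i + d r)) :=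
          mul_nonneg h1 (hSi i)
        have h3 : 0 ≤ v0 i * (1 - ξ i) * D r i :=
          mul_nonneg (mul_nonneg (hv0 i).1 (by linarith [(hξb i).2])) (hD r i)
        linarith
      have hsb := Finset.sum_le_sum hterm
      have h3 : ∑ i, -(ξ i * w i * (A r ⬝ᵥ x none - (D.mulVec v0 r + d r)))
          = -((∑ i, ξ i * w i) * (A r ⬝ᵥ x none - (D.mulVec v0 r + d r))) := by
        rw [Finset.sum_neg_distrib, Finset.sum_mul]
      have h4 : (∑ i, ξ i * w i) * (A r ⬝ᵥ x none - (D.mulVec v0 r + d r))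
          ≤ 1 * (A r ⬝ᵥ x none - (D.mulVec v0 r + d r)) :=
        mul_le_mul_of_nonneg_right (hkey ξ hξ) hS0
      rw [h3] at hsb
      linarith
    · -- cost
      intro ξ hξ
      rw [hlin c ξ]
      have hc0 : c ⬝ᵥ x none ≤ z := hz none
      have hb : ∑ i, ξ i * w i * (c ⬝ᵥ x (some i) - c ⬝ᵥ x none)
          ≤ ∑ i, ξ i * w i * (z - c ⬝ᵥ x none) :=
        Finset.sum_le_sum fun i _ =>
          mul_le_mul_of_nonneg_left (by linarith [hz (some i)])
            (mul_nonneg (((hUmem ξ).mp hξ).1 i).1 (hw0 i))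
      have hb2 : ∑ i, ξ i * w i * (z - c ⬝ᵥ x none)
          = (∑ i, ξ i * w i) * (z - c ⬝ᵥ x none) := (Finset.sum_mul ..).symm
      have hb3 : (∑ i, ξ i * w i) * (z - c ⬝ᵥ x none) ≤ 1 * (z - c ⬝ᵥ x none) :=
        mul_le_mul_of_nonneg_right (hkey ξ hξ) (by linarith)
      linarith

  refine ⟨part1, ?_⟩
  rw [ZPAP, ZAFF]
  refine le_sInf ?_
  rintro b ⟨z, x, hx, rfl⟩
  obtain ⟨P, q, h1, h2, h3⟩ := part1 z x hx
  refine le_trans (sInf_le ⟨P, q, h1, h2, rfl⟩) ?_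
  exact iSup_le fun ξ => EReal.coe_le_coe_iff.mpr (h3 ξ.1 ξ.2)
end

section
/- Let U ⊆ ℝ^m_+, v_0 ∈ ℝ^m_+ and ρ_1,…,ρ_m > 0 with v_i = v_0 + ρ_i e_i, and assume Σ_{i=1}^m ((ξ − v_0)_+)_i/ρ_i ≤ 1 for all ξ ∈ U. Let (z, x_0,…,x_m) satisfy z ≥ c·x_i and A x_i ≥ D v_i + d for all i ∈ {0,…,m}. Define λ_i(ξ) = ((ξ − v_0)_+)_i/ρ_i and the piecewise affine policy x(ξ) = Σ_{i=1}^m λ_i(ξ) x_i + (1 − Σ_{i=1}^m λ_i(ξ)) x_0. Then x(ξ) = P·(ξ − v_0)_+ + x_0 where P is the n×m matrix whose i-th column is (x_i − x_0)/ρ_i, and for every ξ ∈ U: A x(ξ) ≥ D·((ξ − v_0)_+ + v_0) + d componentwise and c·x(ξ) ≤ z. -/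
open Matrix

private lemma dot_comb {m n : ℕ} (g : Fin n → ℝ) (xv : Option (Fin m) → Fin n → ℝ)
    (f : Fin m → ℝ) :
    g ⬝ᵥ (fun b => (∑ i, f i * xv (some i) b) + (1 - ∑ i, f i) * xv none b)
      = ∑ i, f i * (g ⬝ᵥ xv (some i)) + (1 - ∑ i, f i) * (g ⬝ᵥ xv none) := by
  simp only [dotProduct, mul_add, Finset.mul_sum, Finset.sum_add_distrib]
  rw [Finset.sum_comm]
  congr 1
  · exact Finset.sum_congr rfl fun i _ => Finset.sum_congr rfl fun b _ => by ring
  · exact Finset.sum_congr rfl fun b _ => by ring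

/-- **The piecewise affine policy in matrix form and its feasibility/cost bound.**
With `λᵢ(ξ) = ((ξ − v₀)₊)ᵢ/ρᵢ` and `x(ξ) = Σᵢ λᵢ(ξ) xᵢ + (1 − Σᵢ λᵢ(ξ)) x₀`, one has
`x(ξ) = P (ξ − v₀)₊ + x₀` where the `i`-th column of `P` is `(xᵢ − x₀)/ρᵢ`, and for all
`ξ ∈ U`: `A x(ξ) ≥ D((ξ − v₀)₊ + v₀) + d` and `c·x(ξ) ≤ z`. -/
theorem stmt10 {l n m : ℕ}
    (A : Matrix (Fin l) (Fin n) ℝ) (c : Fin n → ℝ)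
    (D : Matrix (Fin l) (Fin m) ℝ) (d : Fin l → ℝ)
    (hD : ∀ i j, 0 ≤ D i j) (hd : ∀ i, 0 ≤ d i)
    (U : Set (Fin m → ℝ)) (hUnn : ∀ ξ ∈ U, ∀ i, 0 ≤ ξ i)
    (v0 : Fin m → ℝ) (hv0 : ∀ i, 0 ≤ v0 i)
    (ρ : Fin m → ℝ) (hρ : ∀ i, 0 < ρ i)
    (hdomval : ∀ ξ ∈ U, (∑ i, max (ξ i - v0 i) 0 / ρ i) ≤ 1)
    (z : ℝ) (xv : Option (Fin m) → Fin n → ℝ)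
    (hz : ∀ i, c ⬝ᵥ xv i ≤ z)
    (hfeas : ∀ i k, (D.mulVec ((Option.elim i v0
        (fun a => v0 + ρ a • (Pi.single a (1 : ℝ) : Fin m → ℝ))))) k + d k ≤
      (A.mulVec (xv i)) k) :
    let lam : (Fin m → ℝ) → Fin m → ℝ := fun ξ i => max (ξ i - v0 i) 0 / ρ i
    let X : (Fin m → ℝ) → Fin n → ℝ := fun ξ b =>
      (∑ i, lam ξ i * xv (some i) b) + (1 - ∑ i, lam ξ i) * xv none b
    let P : Matrix (Fin n) (Fin m) ℝ := fun b i => (xv (some i) b - xv none b) / ρ i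
    (∀ ξ : Fin m → ℝ, X ξ = P.mulVec (fun i => max (ξ i - v0 i) 0) + xv none) ∧
    (∀ ξ ∈ U,
      (∀ r, (D.mulVec (fun i => max (ξ i - v0 i) 0 + v0 i)) r + d r ≤ (A.mulVec (X ξ)) r) ∧
      c ⬝ᵥ X ξ ≤ z) := by
  intro lam X P
  have hρ0 : ∀ i, ρ i ≠ 0 := fun i => (hρ i).ne'
  constructor
  · intro ξ
    funext b
    simp only [X, lam, P, Matrix.mulVec, dotProduct, Pi.add_apply]
    rw [show (∑ i, (xv (some i) b - xv none b) / ρ i * max (ξ i - v0 i) 0)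
        = ∑ i, (max (ξ i - v0 i) 0 / ρ i * xv (some i) b
            - max (ξ i - v0 i) 0 / ρ i * xv none b) from
      Finset.sum_congr rfl fun i _ => by ring]
    rw [Finset.sum_sub_distrib, ← Finset.sum_mul]
    ring
  · intro ξ hξ
    have hlamnn : ∀ i, 0 ≤ lam ξ i :=
      fun i => div_nonneg (le_max_right _ _) (hρ i).le
    have hs : ∑ i, lam ξ i ≤ 1 := hdomval ξ hξ
    have h1s : 0 ≤ 1 - ∑ i, lam ξ i := by linarith
    constructor
    · intro r
      have hAl : A.mulVec (X ξ) r
          = ∑ i, lam ξ i * (A.mulVec (xv (some i)) r)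
            + (1 - ∑ i, lam ξ i) * (A.mulVec (xv none) r) :=
        dot_comb (A r) xv (lam ξ)
      have hveq : (fun i => max (ξ i - v0 i) 0 + v0 i)
          = (fun j => ∑ i, lam ξ i * ((v0 + ρ i • (Pi.single i (1:ℝ) : Fin m → ℝ)) j)
              + (1 - ∑ i, lam ξ i) * v0 j) := by
        funext j
        simp only [Pi.add_apply, Pi.smul_apply, smul_eq_mul, mul_add, Finset.sum_add_distrib]
        rw [show (∑ i, lam ξ i * (ρ i * (Pi.single i (1:ℝ) : Fin m → ℝ) j))
            = ∑ i, (if j = i then lam ξ i * ρ i else 0) from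
          Finset.sum_congr rfl fun i _ => by
            rcases eq_or_ne j i with h | h
            · subst h; simp
            · simp [Pi.single_apply, h]]
        rw [Finset.sum_ite_eq (Finset.univ) j (fun i => lam ξ i * ρ i)]
        simp only [Finset.mem_univ, if_true]
        have : lam ξ j * ρ j = max (ξ j - v0 j) 0 := div_mul_cancel₀ _ (hρ0 j)
        rw [← Finset.sum_mul, this]
        ring
      have key : D.mulVec (fun j => ∑ i, lam ξ i * ((v0 + ρ i • (Pi.single i (1:ℝ) : Fin m → ℝ)) j)
              + (1 - ∑ i, lam ξ i) * v0 j) r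
          = ∑ i, lam ξ i * (D.mulVec (v0 + ρ i • (Pi.single i (1:ℝ) : Fin m → ℝ)) r)
            + (1 - ∑ i, lam ξ i) * (D.mulVec v0 r) :=
        dot_comb (D r) (fun o => o.elim v0 fun a => v0 + ρ a • (Pi.single a (1:ℝ) : Fin m → ℝ)) (lam ξ)
      have hDl : D.mulVec (fun i => max (ξ i - v0 i) 0 + v0 i) r + d r
          = ∑ i, lam ξ i * (D.mulVec (v0 + ρ i • (Pi.single i (1:ℝ) : Fin m → ℝ)) r + d r)
            + (1 - ∑ i, lam ξ i) * (D.mulVec v0 r + d r) := by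
        rw [hveq, key]
        simp only [mul_add, Finset.sum_add_distrib, ← Finset.sum_mul]
        ring
      rw [hAl, hDl]
      refine add_le_add (Finset.sum_le_sum fun i _ =>
        mul_le_mul_of_nonneg_left ?_ (hlamnn i))
        (mul_le_mul_of_nonneg_left ?_ h1s)
      · exact hfeas (some i) r
      · exact hfeas none r
    · have hc : c ⬝ᵥ X ξ
          = ∑ i, lam ξ i * (c ⬝ᵥ xv (some i)) + (1 - ∑ i, lam ξ i) * (c ⬝ᵥ xv none) :=
        dot_comb c xv (lam ξ)
      rw [hc]
      calc ∑ i, lam ξ i * (c ⬝ᵥ xv (some i)) + (1 - ∑ i, lam ξ i) * (c ⬝ᵥ xv none)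
          ≤ ∑ i, lam ξ i * z + (1 - ∑ i, lam ξ i) * z :=
            add_le_add (Finset.sum_le_sum fun i _ =>
              mul_le_mul_of_nonneg_left (hz (some i)) (hlamnn i))
              (mul_le_mul_of_nonneg_left (hz none) h1s)
        _ = z := by rw [← Finset.sum_mul]; ring
end

section
/- Let c ∈ ℝ^m, ζ ∈ [0,1]^m, and k a positive integer with k ≤ m. Then max { c·(ξ − ζ)_+ : ξ ∈ ℝ^m, 0 ≤ ξ ≤ e, e·ξ ≤ k } = min { e·β + k·α : α ∈ ℝ, β ∈ ℝ^m, α ≥ 0, β ≥ 0, β_i + α ≥ c_i·(1 − ζ_i) for all i }. -/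
open Finset

lemma stmt11_pt (ci ζi ξi : ℝ) (hζ0 : 0 ≤ ζi) (hζ1 : ζi ≤ 1)
    (hξ0 : 0 ≤ ξi) (hξ1 : ξi ≤ 1) :
    ci * max (ξi - ζi) 0 ≤ max (ci * (1 - ζi)) 0 * ξi := by
  rcases le_or_gt (ξi - ζi) 0 with h | h
  · rw [max_eq_right h]
    have : 0 ≤ max (ci * (1 - ζi)) 0 * ξi := mul_nonneg (le_max_right _ _) hξ0
    linarith
  · rw [max_eq_left h.le]
    rcases le_or_gt ci 0 with hc | hc
    · have h1 : ci * (ξi - ζi) ≤ 0 := mul_nonpos_of_nonpos_of_nonneg hc h.le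
      have h2 : 0 ≤ max (ci * (1 - ζi)) 0 * ξi := mul_nonneg (le_max_right _ _) hξ0
      linarith
    · have h1 : ci * (1 - ζi) * ξi ≤ max (ci * (1 - ζi)) 0 * ξi :=
        mul_le_mul_of_nonneg_right (le_max_left _ _) hξ0
      nlinarith [mul_nonneg hζ0 (sub_nonneg.2 hξ1)]

/-- **LP duality for the budgeted maximum of `c·(ξ − ζ)₊` (Lemma 10).** -/
theorem stmt11 {m : ℕ} (c : Fin m → ℝ) (ζ : Fin m → ℝ)
    (hζ : ∀ i, 0 ≤ ζ i ∧ ζ i ≤ 1) (k : ℕ) (hk1 : 1 ≤ k) (hkm : k ≤ m) :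
    sSup {y : ℝ | ∃ ξ : Fin m → ℝ, (∀ i, 0 ≤ ξ i ∧ ξ i ≤ 1) ∧ (∑ i, ξ i) ≤ (k : ℝ) ∧
        y = ∑ i, c i * max (ξ i - ζ i) 0} =
      sInf {y : ℝ | ∃ (α : ℝ) (β : Fin m → ℝ), 0 ≤ α ∧ (∀ i, 0 ≤ β i) ∧
        (∀ i, c i * (1 - ζ i) ≤ β i + α) ∧ y = (∑ i, β i) + (k : ℝ) * α} := by
  classical
  set S := {y : ℝ | ∃ ξ : Fin m → ℝ, (∀ i, 0 ≤ ξ i ∧ ξ i ≤ 1) ∧ (∑ i, ξ i) ≤ (k : ℝ) ∧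
        y = ∑ i, c i * max (ξ i - ζ i) 0} with hS
  set T := {y : ℝ | ∃ (α : ℝ) (β : Fin m → ℝ), 0 ≤ α ∧ (∀ i, 0 ≤ β i) ∧
        (∀ i, c i * (1 - ζ i) ≤ β i + α) ∧ y = (∑ i, β i) + (k : ℝ) * α} with hT
  set d : Fin m → ℝ := fun i => max (c i * (1 - ζ i)) 0 with hdd
  have hd0 : ∀ i, 0 ≤ d i := fun i => le_max_right _ _
  have hdge : ∀ i, c i * (1 - ζ i) ≤ d i := fun i => le_max_left _ _
  -- choose a maximizing size-k subset K
  have hne : ((Finset.univ : Finset (Fin m)).powersetCard k).Nonempty := by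
    exact Finset.powersetCard_nonempty.2 (by simpa using hkm)
  obtain ⟨K, hKmem, hKmax⟩ :=
    Finset.exists_max_image ((Finset.univ : Finset (Fin m)).powersetCard k)
      (fun K => ∑ i ∈ K, d i) hne
  have hKcard : K.card = k := (Finset.mem_powersetCard.1 hKmem).2
  set V : ℝ := ∑ i ∈ K, d i with hV
  -- weak duality
  have hweak : ∀ y ∈ S, ∀ z ∈ T, y ≤ z := by
    rintro y ⟨ξ, hξ01, hξsum, rfl⟩ z ⟨α, β, hα, hβ0, hβα, rfl⟩
    have step1 : ∑ i, c i * max (ξ i - ζ i) 0 ≤ ∑ i, (β i + α) * ξ i := by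
      apply Finset.sum_le_sum
      intro i _
      have h1 := stmt11_pt (c i) (ζ i) (ξ i) (hζ i).1 (hζ i).2 (hξ01 i).1 (hξ01 i).2
      have h2 : d i ≤ β i + α := max_le (hβα i) (add_nonneg (hβ0 i) hα)
      exact h1.trans (mul_le_mul_of_nonneg_right h2 (hξ01 i).1)
    have step2 : ∑ i, (β i + α) * ξ i ≤ (∑ i, β i) + (k : ℝ) * α := by
      have e1 : ∑ i, (β i + α) * ξ i = (∑ i, β i * ξ i) + α * ∑ i, ξ i := by
        rw [Finset.mul_sum]
        rw [← Finset.sum_add_distrib]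
        congr 1; ext i; ring
      rw [e1]
      have h3 : ∑ i, β i * ξ i ≤ ∑ i, β i := by
        apply Finset.sum_le_sum
        intro i _
        calc β i * ξ i ≤ β i * 1 := mul_le_mul_of_nonneg_left (hξ01 i).2 (hβ0 i)
        _ = β i := mul_one _
      have h4 : α * ∑ i, ξ i ≤ α * k := mul_le_mul_of_nonneg_left hξsum hα
      linarith
    exact step1.trans step2
  -- V ∈ S
  have hVS : V ∈ S := by
    set K' : Finset (Fin m) := K.filter (fun i => 0 < d i) with hK'
    refine ⟨fun i => if i ∈ K' then (1 : ℝ) else 0, ?_, ?_, ?_⟩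
    · intro i; dsimp only; split <;> norm_num
    · rw [Finset.sum_ite_mem, Finset.univ_inter, Finset.sum_const, nsmul_eq_mul, mul_one]
      have : K'.card ≤ K.card := Finset.card_filter_le _ _
      exact_mod_cast (hKcard ▸ this)
    · have key : ∀ i, c i * max ((if i ∈ K' then (1:ℝ) else 0) - ζ i) 0
          = if i ∈ K' then d i else 0 := by
        intro i
        split
        · rename_i hi
          have hdi : 0 < d i := (Finset.mem_filter.1 hi).2
          have hc : 0 < c i * (1 - ζ i) := by
            by_contra hcon
            push_neg at hcon
            have : d i = 0 := max_eq_right hcon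
            linarith
          have hz : ζ i ≤ 1 := (hζ i).2
          rw [max_eq_left (by linarith : (0:ℝ) ≤ 1 - ζ i)]
          exact (max_eq_left hc.le).symm
        · rw [max_eq_right (by linarith [(hζ i).1] : (0:ℝ) - ζ i ≤ 0), mul_zero]
      calc V = ∑ i ∈ K', d i := by
                refine (Finset.sum_subset (Finset.filter_subset _ _) ?_).symm
                intro i hiK hiK'
                have : ¬ 0 < d i := fun h => hiK' (Finset.mem_filter.2 ⟨hiK, h⟩)
                linarith [hd0 i]
        _ = ∑ i, (if i ∈ K' then d i else 0) := by
                rw [Finset.sum_ite_mem, Finset.univ_inter]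
        _ = ∑ i, c i * max ((if i ∈ K' then (1:ℝ) else 0) - ζ i) 0 := by
                exact Finset.sum_congr rfl (fun i _ => (key i).symm)
  -- V ∈ T
  have hVT : V ∈ T := by
    have hKne : K.Nonempty := by
      rw [← Finset.card_pos, hKcard]; omega
    obtain ⟨j, hjK, hjmin⟩ := K.exists_min_image d hKne
    have hout : ∀ i, i ∉ K → d i ≤ d j := by
      intro i hiK
      by_contra hcon
      push_neg at hcon
      have hins : (insert i (K.erase j)).card = k := by
        rw [Finset.card_insert_of_notMem (fun h => hiK (Finset.mem_of_mem_erase h)),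
          Finset.card_erase_of_mem hjK, hKcard]
        omega
      have hmem2 : insert i (K.erase j) ∈ (Finset.univ : Finset (Fin m)).powersetCard k :=
        Finset.mem_powersetCard.2 ⟨Finset.subset_univ _, hins⟩
      have hle := hKmax _ hmem2
      rw [Finset.sum_insert (fun h => hiK (Finset.mem_of_mem_erase h))] at hle
      have herase : ∑ x ∈ K.erase j, d x = (∑ x ∈ K, d x) - d j := by
        have := Finset.add_sum_erase K d hjK
        linarith
      rw [herase] at hle
      linarith
    refine ⟨d j, fun i => max (d i - d j) 0, hd0 j, fun i => le_max_right _ _, ?_, ?_⟩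
    · intro i
      have : d i ≤ max (d i - d j) 0 + d j := by
        rcases le_total (d i - d j) 0 with h | h
        · rw [max_eq_right h]; linarith
        · rw [max_eq_left h]; linarith
      exact (hdge i).trans this
    · have hsplit : ∑ i, max (d i - d j) 0
          = ∑ i ∈ K, max (d i - d j) 0 + ∑ i ∈ Kᶜ, max (d i - d j) 0 :=
        (Finset.sum_add_sum_compl K _).symm
      have h1 : ∑ i ∈ K, max (d i - d j) 0 = V - (k : ℝ) * d j := by
        have : ∀ i ∈ K, max (d i - d j) 0 = d i - d j := by
          intro i hi
          exact max_eq_left (by linarith [hjmin i hi])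
        rw [Finset.sum_congr rfl this, Finset.sum_sub_distrib, Finset.sum_const,
          hKcard, nsmul_eq_mul]
      have h2 : ∑ i ∈ Kᶜ, max (d i - d j) 0 = 0 := by
        apply Finset.sum_eq_zero
        intro i hi
        exact max_eq_right (by linarith [hout i (Finset.mem_compl.1 hi)])
      rw [hsplit, h1, h2]
      ring
  -- conclude
  have hub : ∀ y ∈ S, y ≤ V := fun y hy => hweak y hy V hVT
  have hlb : ∀ z ∈ T, V ≤ z := fun z hz => hweak V hVS z hz
  have h1 : sSup S = V :=
    le_antisymm (csSup_le ⟨V, hVS⟩ hub) (le_csSup ⟨V, hub⟩ hVS)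
  have h2 : sInf T = V :=
    le_antisymm (csInf_le ⟨V, hlb⟩ hVT) (le_csInf ⟨V, hVT⟩ hlb)
  rw [h1, h2]
end

section
/- Let m ≥ 2, p > 1, and U = {ξ ∈ ℝ^m_+ : ‖ξ‖_p ≤ 1} be the nonnegative p-norm ball. Set μ = 2^{1/p}·(2(m−1)+2^p)^{−1/p²}·p^{−1}·(p−1)^{1/p + (1−1/p)²} and ρ = 2^{1/p − 1}·(2(m−1)+2^p)^{1/p − 1/p²}·p^{−1}·(p−1)^{(1−1/p)²}, and let v_0 = μ·e, v_i = v_0 + ρ·e_i. Then: (i) for every ξ ∈ U, Σ_{i=1}^m (ξ_i − μ)_+ ≤ ρ, so Û = conv(v_0,…,v_m) dominates U; and (ii) the scaling factor β defined by β^p = (m−1)·μ^p + (μ+ρ)^p (so that (1/β)·v_i ∈ U for all i) satisfies β ≤ (2(m−1) + 2^p)^{1/p − 1/p²}·p^{1/p − 1}·(p−1)^{(1−1/p)²}. -/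
/-!
For `t ≥ 0` one has `t - μ ≤ ρ t^p`: by Young's inequality the minimum of `ρ t^p - t` is
`-(1 - 1/p) (pρ)^(-1/(p-1))`, and `μ` is exactly this number. Summing over the coordinates of
`ξ ∈ U` gives `Σ (ξ_i - μ)_+ ≤ ρ Σ ξ_i^p ≤ ρ`, so `h ξ = μ e + ρ w` with `w ≥ 0`, `Σ w_i ≤ 1`,
a convex combination of the `v_i`.

For (ii), `(μ + ρ)^p ≤ 2^(p-1) (μ^p + ρ^p)`, and with `A = 2(m-1) + 2^p` the constants satisfy
`A μ^p = 2^p (p-1) ρ^p` and `T^p = p 2^(p-1) ρ^p` for the claimed bound `T`; together these give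
`β^p ≤ T^p`. The identities between the constants are checked on logarithms.
-/

open Real Finset

section NonnegLpBall

variable {ι : Type*} [Fintype ι]

def nonnegLpBall (p : ℝ) : Set (ι → ℝ) :=
  {ξ | (∀ i, 0 ≤ ξ i) ∧ (∑ i, |ξ i| ^ p) ^ (1 / p) ≤ 1}

lemma mem_nonnegLpBall_iff {p : ℝ} (hp : 0 < p) {ξ : ι → ℝ} :
    ξ ∈ nonnegLpBall p ↔ (∀ i, 0 ≤ ξ i) ∧ ∑ i, ξ i ^ p ≤ 1 := by
  refine and_congr_right fun hξ => ?_
  have hsum : ∑ i, |ξ i| ^ p = ∑ i, ξ i ^ p :=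
    sum_congr rfl fun i _ => by rw [abs_of_nonneg (hξ i)]
  rw [hsum, one_div,
    rpow_inv_le_iff_of_pos (sum_nonneg fun i _ => rpow_nonneg (hξ i) p) zero_le_one hp, one_rpow]

lemma inv_smul_mem_nonnegLpBall {p β : ℝ} (hp : 0 < p) (hβ : 0 ≤ β) {x : ι → ℝ}
    (hx0 : ∀ i, 0 ≤ x i) (hx : ∑ i, x i ^ p ≤ β ^ p) : β⁻¹ • x ∈ nonnegLpBall p := by
  have hβ' := inv_nonneg.2 hβ
  refine (mem_nonnegLpBall_iff hp).2 ⟨fun i => mul_nonneg hβ' (hx0 i), ?_⟩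
  calc ∑ i, (β⁻¹ • x) i ^ p = β⁻¹ ^ p * ∑ i, x i ^ p := by
        simp_rw [Pi.smul_apply, smul_eq_mul, mul_rpow hβ' (hx0 _), mul_sum]
    _ ≤ β⁻¹ ^ p * β ^ p := mul_le_mul_of_nonneg_left hx (rpow_nonneg hβ' p)
    _ = (β⁻¹ * β) ^ p := (mul_rpow hβ' hβ).symm
    _ ≤ 1 := rpow_le_one (mul_nonneg hβ' hβ) (inv_mul_le_one_of_le₀ le_rfl hβ) hp.le

lemma sum_max_sub_le {p μ ρ : ℝ} (hρ : 0 ≤ ρ) (htangent : ∀ t, 0 ≤ t → t - μ ≤ ρ * t ^ p)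
    {ξ : ι → ℝ} (hξ0 : ∀ i, 0 ≤ ξ i) (hξ : ∑ i, ξ i ^ p ≤ 1) :
    ∑ i, max (ξ i - μ) 0 ≤ ρ :=
  calc ∑ i, max (ξ i - μ) 0 ≤ ∑ i, ρ * ξ i ^ p :=
        sum_le_sum fun i _ => max_le (htangent _ (hξ0 i)) (mul_nonneg hρ (rpow_nonneg (hξ0 i) p))
    _ = ρ * ∑ i, ξ i ^ p := (mul_sum ..).symm
    _ ≤ ρ := mul_le_of_le_one_right hρ hξ

end NonnegLpBall

section SimplexVertex

variable {ι : Type*} [Fintype ι] [DecidableEq ι]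

noncomputable def simplexVertex (μ ρ : ℝ) : Option ι → ι → ℝ :=
  fun o => o.elim (fun _ => μ) (fun i => (fun _ => μ) + ρ • (Pi.single i (1 : ℝ) : ι → ℝ))

omit [Fintype ι] in
lemma simplexVertex_some_apply (μ ρ : ℝ) (i j : ι) :
    simplexVertex μ ρ (some i) j = if j = i then μ + ρ else μ := by
  by_cases hji : j = i <;> simp [simplexVertex, hji]

omit [Fintype ι] in
lemma simplexVertex_nonneg {μ ρ : ℝ} (hμ : 0 ≤ μ) (hρ : 0 ≤ ρ) (o : Option ι) (j : ι) :
    0 ≤ simplexVertex μ ρ o j := by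
  rcases o with _ | i
  · exact hμ
  · rw [simplexVertex_some_apply]
    split_ifs <;> positivity

lemma sum_ite_eq_card_sub_one_mul_add {R : Type*} [CommRing R] (i : ι) (a b : R) :
    ∑ j, (if j = i then a else b) = (Fintype.card ι - 1) * b + a := by
  have : Nonempty ι := ⟨i⟩
  simp [sum_ite, filter_ne', filter_eq', Nat.cast_sub Fintype.card_pos]
  ring

lemma sum_simplexVertex_rpow_le {μ ρ p : ℝ} (hμ : 0 ≤ μ) (hρ : 0 ≤ ρ) (hp : 0 ≤ p)
    (o : Option ι) :
    ∑ j, simplexVertex μ ρ o j ^ p ≤ (Fintype.card ι - 1) * μ ^ p + (μ + ρ) ^ p := by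
  rcases o with _ | i
  · have : μ ^ p ≤ (μ + ρ) ^ p := rpow_le_rpow hμ (le_add_of_nonneg_right hρ) hp
    simp only [simplexVertex, Option.elim_none, sum_const, card_univ, nsmul_eq_mul]
    linarith
  · simp only [simplexVertex_some_apply, apply_ite (· ^ p)]
    exact (sum_ite_eq_card_sub_one_mul_add i _ _).le

lemma const_add_smul_mem_convexHull_simplexVertex (μ ρ : ℝ) {w : ι → ℝ} (hw0 : ∀ i, 0 ≤ w i)
    (hw1 : ∑ i, w i ≤ 1) :
    (fun _ => μ) + ρ • w ∈ convexHull ℝ (Set.range (simplexVertex μ ρ)) := by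
  set c : Option ι → ℝ := fun o => o.elim (1 - ∑ i, w i) w
  have hc0 : ∀ o ∈ univ, 0 ≤ c o := by
    rintro (_ | i) _
    exacts [sub_nonneg.2 hw1, hw0 i]
  have hc1 : ∑ o, c o = 1 := by simp [c, Fintype.sum_option]
  have hcomb : ∑ o, c o • simplexVertex μ ρ o = (fun _ => μ) + ρ • w := by
    ext j
    simp [c, Fintype.sum_option, simplexVertex, Pi.single_apply, mul_add, sum_add_distrib,
      ← sum_mul]
    ring
  rw [← hcomb]
  exact (convex_convexHull ℝ _).sum_mem hc0 hc1 fun o _ => subset_convexHull ℝ _ ⟨o, rfl⟩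

end SimplexVertex

lemma le_mul_rpow_add_mul_rpow {p ρ t : ℝ} (hp : 1 < p) (hρ : 0 < ρ) (ht : 0 ≤ t) :
    t ≤ ρ * t ^ p + (p - 1) / p * (p * ρ) ^ (-(p - 1)⁻¹) := by
  have hp0 : 0 < p := zero_lt_one.trans hp
  have hpρ : 0 < p * ρ := mul_pos hp0 hρ
  set c := (p * ρ) ^ p⁻¹
  have hc : 0 < c := rpow_pos_of_pos hpρ _
  have hq : p.HolderConjugate (p / (p - 1)) := (holderConjugate_iff_eq_conjExponent hp).2 rfl
  have hcp : c ^ p = p * ρ := by rw [← rpow_mul hpρ.le, inv_mul_cancel₀ hp0.ne', rpow_one]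
  have hcq : c⁻¹ ^ (p / (p - 1)) = (p * ρ) ^ (-(p - 1)⁻¹) := by
    rw [inv_rpow hc.le, ← rpow_mul hpρ.le, ← rpow_neg hpρ.le]
    field_simp
  calc t = t * c * c⁻¹ := by field_simp
    _ ≤ (t * c) ^ p / p + c⁻¹ ^ (p / (p - 1)) / (p / (p - 1)) :=
      young_inequality_of_nonneg (mul_nonneg ht hc.le) (inv_nonneg.2 hc.le) hq
    _ = ρ * t ^ p + (p - 1) / p * (p * ρ) ^ (-(p - 1)⁻¹) := by
      rw [mul_rpow ht hc.le, hcp, hcq]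
      field_simp

lemma rpow_add_le_two_rpow_mul_rpow_add_rpow {p a b : ℝ} (hp : 1 ≤ p) (ha : 0 ≤ a) (hb : 0 ≤ b) :
    (a + b) ^ p ≤ 2 ^ (p - 1) * (a ^ p + b ^ p) := by
  lift a to NNReal using ha
  lift b to NNReal using hb
  exact_mod_cast NNReal.rpow_add_le_mul_rpow_add_rpow a b hp

section Constants

variable {A p : ℝ}

noncomputable def pBallMu (A p : ℝ) : ℝ :=
  2 ^ (1 / p) * A ^ (-(1 / p ^ 2)) * p⁻¹ * (p - 1) ^ (1 / p + (1 - 1 / p) ^ 2)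

noncomputable def pBallRho (A p : ℝ) : ℝ :=
  2 ^ (1 / p - 1) * A ^ (1 / p - 1 / p ^ 2) * p⁻¹ * (p - 1) ^ ((1 - 1 / p) ^ 2)

noncomputable def pBallScaleBound (A p : ℝ) : ℝ :=
  A ^ (1 / p - 1 / p ^ 2) * p ^ (1 / p - 1) * (p - 1) ^ ((1 - 1 / p) ^ 2)

variable (hA : 0 < A) (hp : 1 < p)
include hA hp

lemma pBallMu_pos : 0 < pBallMu A p := by
  have := sub_pos.2 hp
  unfold pBallMu
  positivity

lemma pBallRho_pos : 0 < pBallRho A p := by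
  have := sub_pos.2 hp
  unfold pBallRho
  positivity

lemma pBallScaleBound_pos : 0 < pBallScaleBound A p := by
  have := sub_pos.2 hp
  unfold pBallScaleBound
  positivity

lemma log_pBallMu : log (pBallMu A p) =
    1 / p * log 2 - 1 / p ^ 2 * log A - log p + (1 / p + (1 - 1 / p) ^ 2) * log (p - 1) := by
  have hp1 := sub_pos.2 hp
  rw [pBallMu, log_mul (by positivity) (by positivity), log_mul (by positivity) (by positivity),
    log_mul (by positivity) (by positivity), log_rpow two_pos, log_rpow hA, log_rpow hp1, log_inv]
  ring

lemma log_pBallRho : log (pBallRho A p) =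
    (1 / p - 1) * log 2 + (1 / p - 1 / p ^ 2) * log A - log p + (1 - 1 / p) ^ 2 * log (p - 1) := by
  have hp1 := sub_pos.2 hp
  rw [pBallRho, log_mul (by positivity) (by positivity), log_mul (by positivity) (by positivity),
    log_mul (by positivity) (by positivity), log_rpow two_pos, log_rpow hA, log_rpow hp1, log_inv]
  ring

lemma log_pBallScaleBound : log (pBallScaleBound A p) =
    (1 / p - 1 / p ^ 2) * log A + (1 / p - 1) * log p + (1 - 1 / p) ^ 2 * log (p - 1) := by
  have hp0 := zero_lt_one.trans hp
  have hp1 := sub_pos.2 hp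
  rw [pBallScaleBound, log_mul (by positivity) (by positivity),
    log_mul (by positivity) (by positivity), log_rpow hA, log_rpow hp0, log_rpow hp1]

lemma pBallMu_eq : pBallMu A p = (p - 1) / p * (p * pBallRho A p) ^ (-(p - 1)⁻¹) := by
  have hp0 := zero_lt_one.trans hp
  have hp1 := sub_pos.2 hp
  have hρ := pBallRho_pos hA hp
  refine log_injOn_pos (pBallMu_pos hA hp) (Set.mem_Ioi.2 (by positivity)) ?_
  rw [log_pBallMu hA hp, log_mul (by positivity) (by positivity), log_div hp1.ne' hp0.ne',
    log_rpow (by positivity), log_mul hp0.ne' hρ.ne', log_pBallRho hA hp]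
  field_simp
  ring

lemma mul_pBallMu_rpow : A * pBallMu A p ^ p = 2 ^ p * (p - 1) * pBallRho A p ^ p := by
  have hp0 := zero_lt_one.trans hp
  have hp1 := sub_pos.2 hp
  have hμ := pBallMu_pos hA hp
  have hρ := pBallRho_pos hA hp
  refine log_injOn_pos (Set.mem_Ioi.2 (by positivity)) (Set.mem_Ioi.2 (by positivity)) ?_
  rw [log_mul (by positivity) (by positivity), log_mul (by positivity) (by positivity),
    log_mul (by positivity) (by positivity), log_rpow hμ, log_rpow hρ, log_rpow two_pos,
    log_pBallMu hA hp, log_pBallRho hA hp]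
  field_simp
  ring

lemma pBallScaleBound_rpow : pBallScaleBound A p ^ p = p * 2 ^ (p - 1) * pBallRho A p ^ p := by
  have hp0 := zero_lt_one.trans hp
  have hρ := pBallRho_pos hA hp
  have hT := pBallScaleBound_pos hA hp
  refine log_injOn_pos (Set.mem_Ioi.2 (by positivity)) (Set.mem_Ioi.2 (by positivity)) ?_
  rw [log_rpow hT, log_mul (by positivity) (by positivity), log_mul (by positivity) (by positivity),
    log_rpow hρ, log_rpow two_pos, log_pBallScaleBound hA hp, log_pBallRho hA hp]
  field_simp
  ring

lemma le_pBallScaleBound {k β : ℝ} (hk : A = 2 * k + 2 ^ p) (hβ0 : 0 ≤ β)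
    (hβ : β ^ p = k * pBallMu A p ^ p + (pBallMu A p + pBallRho A p) ^ p) :
    β ≤ pBallScaleBound A p := by
  have hμ := pBallMu_pos hA hp
  have hρ := pBallRho_pos hA hp
  have h2 : (2 : ℝ) ^ p = 2 * 2 ^ (p - 1) := by rw [rpow_sub_one two_ne_zero]; ring
  rw [← rpow_le_rpow_iff hβ0 (pBallScaleBound_pos hA hp).le (zero_lt_one.trans hp), hβ,
    pBallScaleBound_rpow hA hp]
  calc k * pBallMu A p ^ p + (pBallMu A p + pBallRho A p) ^ p
      ≤ k * pBallMu A p ^ p + 2 ^ (p - 1) * (pBallMu A p ^ p + pBallRho A p ^ p) := by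
        gcongr
        exact rpow_add_le_two_rpow_mul_rpow_add_rpow hp.le hμ.le hρ.le
    _ = p * 2 ^ (p - 1) * pBallRho A p ^ p := by
        linear_combination (1 / 2) * mul_pBallMu_rpow hA hp - pBallMu A p ^ p / 2 * hk
          + ((p - 1) * pBallRho A p ^ p - pBallMu A p ^ p) / 2 * h2

end Constants

theorem stmt12_general {m : ℕ} (p : ℝ) (hp : 1 < p) :
    let U : Set (Fin m → ℝ) :=
      {ξ | (∀ i, 0 ≤ ξ i) ∧ (∑ i, |ξ i| ^ p) ^ (1 / p) ≤ 1}
    let μ : ℝ := 2 ^ (1 / p) * (2 * ((m : ℝ) - 1) + 2 ^ p) ^ (-(1 / p ^ 2)) * p⁻¹ *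
      (p - 1) ^ (1 / p + (1 - 1 / p) ^ 2)
    let ρ : ℝ := 2 ^ (1 / p - 1) * (2 * ((m : ℝ) - 1) + 2 ^ p) ^ (1 / p - 1 / p ^ 2) * p⁻¹ *
      (p - 1) ^ ((1 - 1 / p) ^ 2)
    let v : Option (Fin m) → Fin m → ℝ :=
      fun o => o.elim (fun _ => μ) (fun i => (fun _ => μ) + ρ • (Pi.single i (1 : ℝ) : Fin m → ℝ))
    let h : (Fin m → ℝ) → Fin m → ℝ := fun ξ i => max (ξ i - μ) 0 + μ
    ∀ β : ℝ, 0 ≤ β → β ^ p = ((m : ℝ) - 1) * μ ^ p + (μ + ρ) ^ p →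
      -- (i)
      (∀ ξ ∈ U, (∑ i, max (ξ i - μ) 0) ≤ ρ) ∧
      (∀ ξ ∈ U, (∀ i, ξ i ≤ h ξ i) ∧ h ξ ∈ convexHull ℝ (Set.range v)) ∧
      -- (ii)
      (∀ i, β⁻¹ • v i ∈ U) ∧
      β ≤ (2 * ((m : ℝ) - 1) + 2 ^ p) ^ (1 / p - 1 / p ^ 2) * p ^ (1 / p - 1) *
        (p - 1) ^ ((1 - 1 / p) ^ 2) := by
  intro U μ ρ v h β hβ0 hβp
  have hp0 : 0 < p := zero_lt_one.trans hp
  have hA : 0 < 2 * ((m : ℝ) - 1) + 2 ^ p := by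
    have : (2 : ℝ) < 2 ^ p := by simpa using rpow_lt_rpow_of_exponent_lt one_lt_two hp
    linarith [m.cast_nonneg (α := ℝ)]
  have hμ : 0 < μ := pBallMu_pos hA hp
  have hρ : 0 < ρ := pBallRho_pos hA hp
  have hμeq : μ = (p - 1) / p * (p * ρ) ^ (-(p - 1)⁻¹) := pBallMu_eq hA hp
  have htangent : ∀ t, 0 ≤ t → t - μ ≤ ρ * t ^ p := fun t ht => by
    linarith [le_mul_rpow_add_mul_rpow hp hρ ht]
  have hsum : ∀ ξ ∈ U, ∑ i, max (ξ i - μ) 0 ≤ ρ := fun ξ hξ =>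
    ((mem_nonnegLpBall_iff hp0).1 hξ).elim (sum_max_sub_le hρ.le htangent)
  refine ⟨hsum, fun ξ hξ => ⟨fun i => sub_le_iff_le_add.1 (le_max_left _ _), ?_⟩, fun o => ?_, ?_⟩
  · have hhξ : h ξ = (fun _ => μ) + ρ • fun i => max (ξ i - μ) 0 / ρ := by
      ext i
      simp [h, mul_div_cancel₀ _ hρ.ne', add_comm]
    rw [hhξ]
    exact const_add_smul_mem_convexHull_simplexVertex μ ρ
      (fun i => div_nonneg (le_max_right _ _) hρ.le)
      (by rw [← sum_div, div_le_one hρ]; exact hsum ξ hξ)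
  · exact inv_smul_mem_nonnegLpBall hp0 hβ0 (simplexVertex_nonneg hμ.le hρ.le o)
      ((sum_simplexVertex_rpow_le hμ.le hρ.le hp0.le o).trans_eq (by rw [Fintype.card_fin, hβp]))
  · exact le_pBallScaleBound hA hp rfl hβ0 hβp

/-- **Proposition (p-norm ball uncertainty).** For `U = {ξ ≥ 0 : ‖ξ‖_p ≤ 1}`, `p > 1`,
with the stated `μ`, `ρ`, `v₀ = μ·e`, `vᵢ = v₀ + ρ eᵢ`, and `β ≥ 0` defined by
`β^p = (m−1)μ^p + (μ+ρ)^p`: (i) `Σᵢ (ξᵢ − μ)₊ ≤ ρ` on `U`, so `Û = conv(v₀,…,v_m)`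
dominates `U`; (ii) `(1/β)·vᵢ ∈ U` for all `i`, and
`β ≤ (2(m−1)+2^p)^{1/p − 1/p²} p^{1/p − 1} (p−1)^{(1−1/p)²}`. -/
theorem stmt12 {m : ℕ} (hm : 2 ≤ m) (p : ℝ) (hp : 1 < p) :
    let U : Set (Fin m → ℝ) :=
      {ξ | (∀ i, 0 ≤ ξ i) ∧ (∑ i, |ξ i| ^ p) ^ (1 / p) ≤ 1}
    let μ : ℝ := 2 ^ (1 / p) * (2 * ((m : ℝ) - 1) + 2 ^ p) ^ (-(1 / p ^ 2)) * p⁻¹ *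
      (p - 1) ^ (1 / p + (1 - 1 / p) ^ 2)
    let ρ : ℝ := 2 ^ (1 / p - 1) * (2 * ((m : ℝ) - 1) + 2 ^ p) ^ (1 / p - 1 / p ^ 2) * p⁻¹ *
      (p - 1) ^ ((1 - 1 / p) ^ 2)
    let v : Option (Fin m) → Fin m → ℝ :=
      fun o => o.elim (fun _ => μ) (fun i => (fun _ => μ) + ρ • (Pi.single i (1 : ℝ) : Fin m → ℝ))
    let h : (Fin m → ℝ) → Fin m → ℝ := fun ξ i => max (ξ i - μ) 0 + μ
    ∀ β : ℝ, 0 ≤ β → β ^ p = ((m : ℝ) - 1) * μ ^ p + (μ + ρ) ^ p →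
      -- (i)
      (∀ ξ ∈ U, (∑ i, max (ξ i - μ) 0) ≤ ρ) ∧
      (∀ ξ ∈ U, (∀ i, ξ i ≤ h ξ i) ∧ h ξ ∈ convexHull ℝ (Set.range v)) ∧
      -- (ii)
      (∀ i, β⁻¹ • v i ∈ U) ∧
      β ≤ (2 * ((m : ℝ) - 1) + 2 ^ p) ^ (1 / p - 1 / p ^ 2) * p ^ (1 / p - 1) *
        (p - 1) ^ ((1 - 1 / p) ^ 2) :=
  stmt12_general p hp
end

section
/- For all real a ∈ (0,1), μ > 0, and j > 0: j·(1/√(a j² + (1−a) j) − μ) ≤ 1/(4(1−a)μ), and j/√(a j² + (1−a) j) ≤ 1/√a. -/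
/-- **Elementary bounds used for the ellipsoid uncertainty set.** For `a ∈ (0,1)`,
`μ > 0`, `j > 0`: `j(1/√(aj² + (1−a)j) − μ) ≤ 1/(4(1−a)μ)` and
`j/√(aj² + (1−a)j) ≤ 1/√a`. -/
theorem stmt15 (a μ j : ℝ) (ha0 : 0 < a) (ha1 : a < 1) (hμ : 0 < μ) (hj : 0 < j) :
    j * (1 / Real.sqrt (a * j ^ 2 + (1 - a) * j) - μ) ≤ 1 / (4 * (1 - a) * μ) ∧
    j / Real.sqrt (a * j ^ 2 + (1 - a) * j) ≤ 1 / Real.sqrt a := by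
  have h1a : 0 < 1 - a := by linarith
  have hpos : 0 < a * j ^ 2 + (1 - a) * j := by positivity
  set s := Real.sqrt (a * j ^ 2 + (1 - a) * j) with hs
  have hs0 : 0 < s := Real.sqrt_pos.mpr hpos
  have hs2 : s ^ 2 = a * j ^ 2 + (1 - a) * j := Real.sq_sqrt hpos.le
  set c := 1 / (4 * (1 - a) * μ) with hcdef
  have hc0 : 0 < c := by positivity
  have hc : 4 * (1 - a) * μ * c = 1 := by
    rw [hcdef]; field_simp
  constructor
  · have key : j ≤ (μ * j + c) * s := by
      have hA : 0 < μ * j + c := by positivity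
      have h2 : j ^ 2 ≤ ((μ * j + c) * s) ^ 2 := by
        have h3 : (1 - a) * j ≤ s ^ 2 := by nlinarith
        have h4 : j ≤ (1 - a) * (μ * j + c) ^ 2 := by
          nlinarith [sq_nonneg (μ * j - c), mul_pos hμ hc0]
        nlinarith [mul_le_mul_of_nonneg_left h3 (sq_nonneg (μ * j + c))]
      nlinarith [mul_pos hA hs0]
    have h5 : j / s ≤ μ * j + c := (div_le_iff₀ hs0).mpr key
    have h6 : j * (1 / s - μ) = j / s - μ * j := by ring
    linarith
  · have ha : Real.sqrt a * j ≤ s := by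
      have : Real.sqrt a * j = Real.sqrt (a * j ^ 2) := by
        rw [Real.sqrt_mul ha0.le, Real.sqrt_sq hj.le]
      rw [this]
      exact Real.sqrt_le_sqrt (by nlinarith)
    have hsa : 0 < Real.sqrt a := Real.sqrt_pos.mpr ha0
    rw [div_le_div_iff₀ hs0 hsa]
    nlinarith
end

section
/- Let U ⊆ [0,1]^m be compact and nonempty. Define v⁰ = 0 and, inductively for j ≥ 0, choose ξ^j ∈ argmax_{ξ∈U} e·(ξ − v^j)_+ and set v^{j+1} = v^j + (ξ^j − v^j)_+. Suppose J is a positive integer such that for every j with 0 ≤ j < J, max_{ξ∈U} e·(ξ − v^j)_+ > j + 1. Then J² ≤ m, i.e., J ≤ √m. -/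
/-- **Termination bound for the vertex-generation algorithm (Algorithm 1).** If the
greedy updates `v^{j+1} = v^j + (ξ^j − v^j)₊` with `ξ^j` maximizing `e·(ξ − v^j)₊`
over `U ⊆ [0,1]^m` satisfy the loop condition `max_{ξ∈U} e·(ξ − v^j)₊ > j + 1` for all
`j < J`, then `J² ≤ m`, i.e. `J ≤ √m`. -/
theorem stmt17 {m : ℕ} (U : Set (Fin m → ℝ)) (hne : U.Nonempty) (hcomp : IsCompact U)
    (hbox : ∀ ξ ∈ U, ∀ i, 0 ≤ ξ i ∧ ξ i ≤ 1)
    (v : ℕ → Fin m → ℝ) (ξ : ℕ → Fin m → ℝ)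
    (hv0 : v 0 = 0)
    (hmem : ∀ j, ξ j ∈ U)
    (hargmax : ∀ j, ∀ η ∈ U, (∑ i, max (η i - v j i) 0) ≤ ∑ i, max (ξ j i - v j i) 0)
    (hstep : ∀ j, v (j + 1) = fun i => v j i + max (ξ j i - v j i) 0)
    (J : ℕ) (hJ : 0 < J)
    (hloop : ∀ j < J, (j : ℝ) + 1 < ∑ i, max (ξ j i - v j i) 0) :
    (J : ℝ) ^ 2 ≤ (m : ℝ) ∧ (J : ℝ) ≤ Real.sqrt m := by
  -- monotonicity of v in j (pointwise)
  have hmono : ∀ j k, j ≤ k → ∀ i, v j i ≤ v k i := by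
    intro j k hjk
    induction k with
    | zero => simp_all
    | succ k ih =>
      intro i
      rcases Nat.lt_or_ge j (k+1) with h | h
      · have := ih (Nat.lt_succ_iff.mp h) i
        rw [hstep k]
        have : v k i ≤ v k i + max (ξ k i - v k i) 0 := le_add_of_nonneg_right (le_max_right _ _)
        exact le_trans (ih (Nat.lt_succ_iff.mp (by omega)) i) this
      · have : j = k + 1 := le_antisymm hjk h
        subst this; exact le_refl _
  -- upper bound v j i ≤ 1
  have hub : ∀ j i, v j i ≤ 1 := by
    intro j
    induction j with
    | zero => intro i; simp [hv0]
    | succ j ih =>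
      intro i
      rw [hstep j]
      simp only []
      rcases le_or_gt (ξ j i - v j i) 0 with h | h
      · rw [max_eq_right h]; simpa using ih i
      · rw [max_eq_left h.le]
        have := (hbox (ξ j) (hmem j) i).2
        linarith
  -- key bound: each increment for j < J exceeds J
  have hkey : ∀ j < J, (J : ℝ) < ∑ i, max (ξ j i - v j i) 0 := by
    intro j hj
    have h1 : (∑ i, max (ξ (J-1) i - v (J-1) i) 0) ≤ ∑ i, max (ξ (J-1) i - v j i) 0 := by
      apply Finset.sum_le_sum
      intro i _
      exact max_le_max (by have := hmono j (J-1) (by omega) i; linarith) le_rfl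
    have h2 : (∑ i, max (ξ (J-1) i - v j i) 0) ≤ ∑ i, max (ξ j i - v j i) 0 :=
      hargmax j (ξ (J-1)) (hmem (J-1))
    have h3 := hloop (J-1) (by omega)
    have hcast : ((J - 1 : ℕ) : ℝ) + 1 = (J : ℝ) := by
      have hh : (J - 1) + 1 = J := by omega
      exact_mod_cast congrArg (Nat.cast : ℕ → ℝ) hh
    linarith
  -- telescoping: sum of v J = sum of increments
  have htel : ∀ j, (∑ i, v j i) = ∑ k ∈ Finset.range j, ∑ i, max (ξ k i - v k i) 0 := by
    intro j
    induction j with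
    | zero => simp [hv0]
    | succ j ih =>
      rw [Finset.sum_range_succ, ← ih]
      simp only [hstep j]
      rw [Finset.sum_add_distrib]
  have hmJ : (J : ℝ) * J < (m : ℝ) := by
    have hup : (∑ i, v J i) ≤ (m : ℝ) := by
      calc (∑ i, v J i) ≤ ∑ _i : Fin m, (1 : ℝ) := Finset.sum_le_sum fun i _ => hub J i
        _ = (m : ℝ) := by simp
    have hlow : (J : ℝ) * J < ∑ i, v J i := by
      rw [htel J]
      calc (J : ℝ) * J = ∑ _k ∈ Finset.range J, (J : ℝ) := by
            simp [mul_comm]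
        _ < _ := by
            apply Finset.sum_lt_sum_of_nonempty
            · exact ⟨0, Finset.mem_range.mpr hJ⟩
            · intro k hk; exact hkey k (Finset.mem_range.mp hk)
    linarith
  have hsq : (J : ℝ) ^ 2 ≤ (m : ℝ) := by nlinarith
  refine ⟨hsq, ?_⟩
  have h := Real.sqrt_le_sqrt hsq
  rwa [Real.sqrt_sq (by positivity : (0:ℝ) ≤ (J:ℝ))] at h
end
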